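/- Let τ = τ1·a1·τ2 be an SC computation of a parallel program P such that a1 hb* a2 for every action a2 in τ2, and suppose τ·a is also an SC computation of P. Then a1 hb* a in Tr(τ·a) if and only if (i) some action in a1·τ2 belongs to the same thread as a, or (ii) a is a load whose address is stored by some action in a1·τ2, or (iii) a is a store (with its issue) whose address is loaded or stored by some action in a1·τ2. -/

import Mathlib

set_option maxHeartbeats 1000000
set_option linter.unusedVariables false

namespace TSORob

attribute [local instance 10] Classical.propDecidable

noncomputable section

variable {Tid Lbl D : Type}

/-! ### Actions -/

/-- Actions: issue, store, load, and local actions (the latter covering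
assignments, asserts and fences). -/
inductive Act (Tid D : Type) : Type where
  | issue (t : Tid)
  | store (t : Tid) (a v : D)
  | load  (t : Tid) (a v : D)
  | loc   (t : Tid)

namespace Act

def thread : Act Tid D → Tid
  | .issue t => t
  | .store t _ _ => t
  | .load t _ _ => t
  | .loc t => t

def isStore : Act Tid D → Prop
  | .store _ _ _ => True
  | _ => False

def isIssue : Act Tid D → Prop
  | .issue _ => True
  | _ => False

def isLoad : Act Tid D → Prop
  | .load _ _ _ => True
  | _ => False

end Act

/-! ### Positions, matching of issues and stores, trace nodes -/

/-- Number of actions satisfying `p` among the first `i` actions of `τ`. -/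
def cntP (τ : List (Act Tid D)) (p : Act Tid D → Prop) (i : ℕ) : ℕ :=
  ((τ.take i).filter fun a => decide (p a)).length

/-- Position of the `k`-th (0-based) action of `τ` satisfying `p`. -/
def posOfNth (τ : List (Act Tid D)) (p : Act Tid D → Prop) (k : ℕ) : Option ℕ :=
  ((List.range τ.length).filter fun i => decide (∃ a, τ[i]? = some a ∧ p a))[k]?

def isStoreOf (t : Tid) (x : Act Tid D) : Prop := x.isStore ∧ x.thread = t
def isIssueOf (t : Tid) (x : Act Tid D) : Prop := x.isIssue ∧ x.thread = t

/-- Position of the issue action corresponding to the store action at position `j`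
(the `k`-th store action of a thread corresponds to its `k`-th issue action, as
buffers are FIFO). -/
def issueOfStore (τ : List (Act Tid D)) (j : ℕ) : Option ℕ :=
  match τ[j]? with
  | some (.store t _ _) => posOfNth τ (isIssueOf t) (cntP τ (isStoreOf t) j)
  | _ => none

/-- Position of the store action corresponding to the issue action at position `i`. -/
def storeOfIssue (τ : List (Act Tid D)) (i : ℕ) : Option ℕ :=
  match τ[i]? with
  | some (.issue t) => posOfNth τ (isStoreOf t) (cntP τ (isIssueOf t) i)
  | _ => none

/-- Rank of the action at position `i` among non-store actions of its thread.
In the trace, an issue and its store form one node; nodes of a thread are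
identified by this rank. -/
def rankAt (τ : List (Act Tid D)) (i : ℕ) : ℕ :=
  match τ[i]? with
  | some a => cntP τ (fun x => x.thread = a.thread ∧ ¬ x.isStore) i
  | none => 0

/-- The trace node corresponding to the action at position `i` of `τ`: a pair of
the thread and the rank of the node in the thread's program order. A store
action yields the node of its issue action. -/
def nodeAt (τ : List (Act Tid D)) (i : ℕ) : Option (Tid × ℕ) :=
  match τ[i]? with
  | some (.store t _ _) => (issueOfStore τ i).map fun p => (t, rankAt τ p)
  | some a => some (a.thread, rankAt τ i)
  | none => none

/-- Relabel the issue actions of a per-thread action sequence by the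
corresponding store actions (given in FIFO order) and drop the store actions:
this yields the per-thread node labels of the trace. -/
def mergeStores : List (Act Tid D) → List (Act Tid D) → List (Act Tid D)
  | [], _ => []
  | .issue t :: rest, stores => stores.headD (.issue t) :: mergeStores rest stores.tail
  | .store _ _ _ :: rest, stores => mergeStores rest stores
  | .load t a v :: rest, stores => .load t a v :: mergeStores rest stores
  | .loc t :: rest, stores => .loc t :: mergeStores rest stores

/-- The sequence of node labels of thread `t` in the trace of `τ`. -/
def threadNodes (τ : List (Act Tid D)) (t : Tid) : List (Act Tid D) :=
  mergeStores (τ.filter fun a => decide (a.thread = t)) (τ.filter fun a => decide (isStoreOf t a))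

/-! ### Traces -/

/-- A trace: per-thread node labels (program order is the per-thread order of
issuing, i.e. the order of the lists), a store order `so` and a source
relation `src` on nodes.  A node is a pair (thread, rank in the thread). -/
structure Trace (Tid D : Type) where
  lab : Tid → List (Act Tid D)
  so : Tid × ℕ → Tid × ℕ → Prop
  src : Tid × ℕ → Tid × ℕ → Prop

namespace Trace

def labAt (T : Trace Tid D) (n : Tid × ℕ) : Option (Act Tid D) := (T.lab n.1)[n.2]?

/-- Program order: per-thread total order in which actions were issued. -/
def po (T : Trace Tid D) (m n : Tid × ℕ) : Prop :=
  m.1 = n.1 ∧ m.2 < n.2 ∧ n.2 < (T.lab n.1).length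

/-- Conflict relation: a load conflicts with a store that overwrites the value
the load reads (including the case where the load reads the initial value). -/
def cf (T : Trace Tid D) (m n : Tid × ℕ) : Prop :=
  ∃ a, (∃ t v, T.labAt m = some (.load t a v)) ∧ (∃ t v, T.labAt n = some (.store t a v)) ∧
    ((∃ p, T.src p m ∧ T.so p n) ∨ ¬ ∃ p, T.src p m)

/-- The happens-before relation `hb = po ∪ so ∪ src ∪ cf`. -/
def hb (T : Trace Tid D) (m n : Tid × ℕ) : Prop :=
  T.po m n ∨ T.so m n ∨ T.src m n ∨ T.cf m n

/-- Acyclicity of a relation. -/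
def Acyclic (r : α → α → Prop) : Prop := ¬ ∃ x, Relation.TransGen r x x

end Trace

/-- Store order of a computation: per-address total order of the store actions. -/
def soRel (τ : List (Act Tid D)) (m n : Tid × ℕ) : Prop :=
  ∃ i j a, i < j ∧ (∃ t v, τ[i]? = some (.store t a v)) ∧ (∃ t v, τ[j]? = some (.store t a v)) ∧
    nodeAt τ i = some m ∧ nodeAt τ j = some n

/-- At position `p`, position `i` is a pending (issued but not yet flushed)
issue of thread `t` with address `a`. -/
def pendingIssue (τ : List (Act Tid D)) (t : Tid) (a : D) (p i : ℕ) : Prop :=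
  i < p ∧ τ[i]? = some (Act.issue t) ∧
  ∃ j v, storeOfIssue τ i = some j ∧ p < j ∧ τ[j]? = some (.store t a v)

/-- Source relation of a computation: each load reads either (early) from the
latest pending buffered store of its own thread to its address, or else from
the latest store action to its address that was flushed to memory before it. -/
def srcRel (τ : List (Act Tid D)) (m n : Tid × ℕ) : Prop :=
  ∃ p t a v, τ[p]? = some (.load t a v) ∧ nodeAt τ p = some n ∧
    ((∃ i, pendingIssue τ t a p i ∧ (∀ i', pendingIssue τ t a p i' → i' ≤ i) ∧
        nodeAt τ i = some m) ∨
     ((¬ ∃ i, pendingIssue τ t a p i) ∧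
      ∃ j, j < p ∧ (∃ t' v', τ[j]? = some (.store t' a v')) ∧
        (∀ j', j' < p → (∃ t' v', τ[j']? = some (.store t' a v')) → j' ≤ j) ∧
        nodeAt τ j = some m))

/-- The trace of a computation. -/
def traceOf (τ : List (Act Tid D)) : Trace Tid D :=
  ⟨fun t => threadNodes τ t, soRel τ, srcRel τ⟩


/-- Instructions: loads, stores, memory fences, local assignments, asserts
(and atomic test-and-set, i.e. a locked instruction).  Expressions are
functions of the register valuation. -/
inductive Instr (D : Type) : Type where
  | load   (r : ℕ) (ae : (ℕ → D) → D)
  | store  (ae ve : (ℕ → D) → D)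
  | mfence
  | assign (r : ℕ) (e : (ℕ → D) → D)
  | assert (e : (ℕ → D) → D)
  | tas    (r : ℕ) (ae ve : (ℕ → D) → D)

/-- A labelled instruction `l : instr; goto l'`. -/
structure LInstr (Lbl D : Type) : Type where
  src : Lbl
  ins : Instr D
  dst : Lbl

/-- A thread: declared registers `0, …, nregs-1`, an initial label, and a
finite list of labelled instructions (several instructions may share a label,
giving branching). -/
structure ThreadCode (Lbl D : Type) : Type where
  nregs : ℕ
  init : Lbl
  code : List (LInstr Lbl D)

/-- A parallel program: a finite family of threads. -/
structure Program (Tid Lbl D : Type) : Type where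
  threads : Tid → ThreadCode Lbl D

/-! ### TSO semantics -/

/-- A TSO configuration: program counters, memory, per-thread registers and
per-thread FIFO store buffers of address–value pairs. -/
structure Conf (Tid Lbl D : Type) : Type where
  pc : Tid → Lbl
  mem : D → D
  regs : Tid → ℕ → D
  buf : Tid → List (D × D)

/-- Pointwise function update. -/
def updf {α β : Type _} (f : α → β) (x : α) (b : β) : α → β :=
  fun y => if y = x then b else f y

/-- The value for address `a` held by the latest buffered store in `β`, if any. -/
def bufVal (β : List (D × D)) (a : D) : Option D :=
  ((β.filter fun p => decide (p.1 = a)).getLast?).map Prod.snd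

/-- The initial configuration: initial labels, all registers and addresses
hold `0`, all buffers are empty. -/
def initConf [Zero D] (P : Program Tid Lbl D) : Conf Tid Lbl D :=
  ⟨fun t => (P.threads t).init, fun _ => 0, fun _ _ => 0, fun _ => []⟩

/-- Events: actions annotated with the instruction that generated them
(flushes of the buffer carry no instruction). -/
abbrev Ev (Tid Lbl D : Type) : Type := Act Tid D × Option (LInstr Lbl D)

/-- The TSO transition relation.  A step emits a list of events. -/
inductive Step [Zero D] (P : Program Tid Lbl D) :
    Conf Tid Lbl D → List (Ev Tid Lbl D) → Conf Tid Lbl D → Prop where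
  | loadBuf (c : Conf Tid Lbl D) (t : Tid) (li : LInstr Lbl D) (r : ℕ)
      (ae : (ℕ → D) → D) (a v : D) :
      li ∈ (P.threads t).code → c.pc t = li.src → li.ins = .load r ae →
      a = ae (c.regs t) → bufVal (c.buf t) a = some v →
      Step P c [(.load t a v, some li)]
        ⟨updf c.pc t li.dst, c.mem, updf c.regs t (updf (c.regs t) r v), c.buf⟩
  | loadMem (c : Conf Tid Lbl D) (t : Tid) (li : LInstr Lbl D) (r : ℕ)
      (ae : (ℕ → D) → D) (a v : D) :
      li ∈ (P.threads t).code → c.pc t = li.src → li.ins = .load r ae →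
      a = ae (c.regs t) → bufVal (c.buf t) a = none → v = c.mem a →
      Step P c [(.load t a v, some li)]
        ⟨updf c.pc t li.dst, c.mem, updf c.regs t (updf (c.regs t) r v), c.buf⟩
  | storeIssue (c : Conf Tid Lbl D) (t : Tid) (li : LInstr Lbl D)
      (ae ve : (ℕ → D) → D) (a v : D) :
      li ∈ (P.threads t).code → c.pc t = li.src → li.ins = .store ae ve →
      a = ae (c.regs t) → v = ve (c.regs t) →
      Step P c [(.issue t, some li)]
        ⟨updf c.pc t li.dst, c.mem, c.regs, updf c.buf t (c.buf t ++ [(a, v)])⟩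
  | flush (c : Conf Tid Lbl D) (t : Tid) (a v : D) (β : List (D × D)) :
      c.buf t = (a, v) :: β →
      Step P c [(.store t a v, none)]
        ⟨c.pc, updf c.mem a v, c.regs, updf c.buf t β⟩
  | fence (c : Conf Tid Lbl D) (t : Tid) (li : LInstr Lbl D) :
      li ∈ (P.threads t).code → c.pc t = li.src → li.ins = .mfence →
      c.buf t = [] →
      Step P c [(.loc t, some li)] ⟨updf c.pc t li.dst, c.mem, c.regs, c.buf⟩
  | assign (c : Conf Tid Lbl D) (t : Tid) (li : LInstr Lbl D) (r : ℕ)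
      (e : (ℕ → D) → D) :
      li ∈ (P.threads t).code → c.pc t = li.src → li.ins = .assign r e →
      Step P c [(.loc t, some li)]
        ⟨updf c.pc t li.dst, c.mem, updf c.regs t (updf (c.regs t) r (e (c.regs t))), c.buf⟩
  | assert (c : Conf Tid Lbl D) (t : Tid) (li : LInstr Lbl D) (e : (ℕ → D) → D) :
      li ∈ (P.threads t).code → c.pc t = li.src → li.ins = .assert e →
      e (c.regs t) ≠ 0 →
      Step P c [(.loc t, some li)] ⟨updf c.pc t li.dst, c.mem, c.regs, c.buf⟩
  | tas (c : Conf Tid Lbl D) (t : Tid) (li : LInstr Lbl D) (r : ℕ)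
      (ae ve : (ℕ → D) → D) (a vold vnew : D) :
      li ∈ (P.threads t).code → c.pc t = li.src → li.ins = .tas r ae ve →
      c.buf t = [] → a = ae (c.regs t) → vold = c.mem a → vnew = ve (c.regs t) →
      Step P c [(.load t a vold, some li), (.issue t, some li), (.store t a vnew, some li)]
        ⟨updf c.pc t li.dst, updf c.mem a vnew, updf c.regs t (updf (c.regs t) r vold), c.buf⟩

/-- Reflexive-transitive closure of `Step`, concatenating the emitted events. -/
inductive Steps [Zero D] (P : Program Tid Lbl D) :
    Conf Tid Lbl D → List (Ev Tid Lbl D) → Conf Tid Lbl D → Prop where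
  | refl (c : Conf Tid Lbl D) : Steps P c [] c
  | trans (c₁ : Conf Tid Lbl D) (ρ₁ : List (Ev Tid Lbl D)) (c₂ : Conf Tid Lbl D)
      (ρ₂ : List (Ev Tid Lbl D)) (c₃ : Conf Tid Lbl D) :
      Step P c₁ ρ₁ c₂ → Steps P c₂ ρ₂ c₃ → Steps P c₁ (ρ₁ ++ ρ₂) c₃

/-- A run of `P` from the initial configuration. -/
def Run [Zero D] (P : Program Tid Lbl D) (ρ : List (Ev Tid Lbl D)) (c : Conf Tid Lbl D) : Prop :=
  Steps P (initConf P) ρ c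

/-- The action sequence of an annotated run. -/
def acts (ρ : List (Ev Tid Lbl D)) : List (Act Tid D) := ρ.map Prod.fst

/-- TSO computations: action sequences leading from the initial configuration
to a configuration in which all buffers are empty. -/
def TSOComput [Zero D] (P : Program Tid Lbl D) (τ : List (Act Tid D)) : Prop :=
  ∃ ρ c, Run P ρ c ∧ acts ρ = τ ∧ ∀ t, c.buf t = []

/-- SC shape: every issue action is immediately followed by its store action
(no buffering).  TSO computations of this shape are exactly the SC
computations; fences then have no effect since buffers are always empty. -/
def SCshape (τ : List (Act Tid D)) : Prop :=
  ∀ i t, τ[i]? = some (.issue t) → ∃ a v, τ[i + 1]? = some (.store t a v)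

/-- SC computations. -/
def SCComput [Zero D] (P : Program Tid Lbl D) (τ : List (Act Tid D)) : Prop :=
  TSOComput P τ ∧ SCshape τ

def TSOTraces [Zero D] (P : Program Tid Lbl D) : Set (Trace Tid D) :=
  {T | ∃ τ, TSOComput P τ ∧ traceOf τ = T}

def SCTraces [Zero D] (P : Program Tid Lbl D) : Set (Trace Tid D) :=
  {T | ∃ τ, SCComput P τ ∧ traceOf τ = T}

/-- TSO robustness: the TSO traces coincide with the SC traces. -/
def Robust [Zero D] (P : Program Tid Lbl D) : Prop := TSOTraces P = SCTraces P

/-! ### Delays, violations -/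

/-- Number of actions of thread `t` strictly between positions `i` and `j`. -/
def distBetween (τ : List (Act Tid D)) (t : Tid) (i j : ℕ) : ℕ :=
  (((τ.take j).drop (i + 1)).filter fun a => decide (a.thread = t)).length

/-- The delay of the store action at position `j`: the distance between it and
its issue action. -/
def storeDelay (τ : List (Act Tid D)) (j : ℕ) : ℕ :=
  match τ[j]? with
  | some (.store t _ _) =>
      match issueOfStore τ j with
      | some i => distBetween τ t i j
      | none => 0
  | _ => 0

/-- The number of delays of a computation: the sum of the distances between
corresponding issue and store actions. -/
def delays (τ : List (Act Tid D)) : ℕ :=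
  ((List.range τ.length).map (storeDelay τ)).sum

/-- A violating TSO computation: its trace is not an SC trace of the program. -/
def Violating [Zero D] (P : Program Tid Lbl D) (τ : List (Act Tid D)) : Prop :=
  TSOComput P τ ∧ traceOf τ ∉ SCTraces P

/-- A minimal violation: a violating computation with the minimal number of
delays among all violating computations of `P`. -/
def MinViolation [Zero D] (P : Program Tid Lbl D) (τ : List (Act Tid D)) : Prop :=
  Violating P τ ∧ ∀ τ', Violating P τ' → delays τ ≤ delays τ'

/-! ### Happens-before through an infix -/

/-- One step of a happens-before path between positions of a computation:
the two positions denote nodes related by `hb` or by `po⁺` (an issue and its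
corresponding store action denote the same node, which covers the issue
relation). -/
def hbStep (τ : List (Act Tid D)) (p q : ℕ) : Prop :=
  ∃ m n, nodeAt τ p = some m ∧ nodeAt τ q = some n ∧
    (m = n ∨ (traceOf τ).hb m n ∨ Relation.TransGen (traceOf τ).po m n)

/-- `a` happens-before `b` through `β` (for `τ = α·a·β·b·γ`, `i` the position
of `a`, `j` the position of `b`): there is a subsequence `c₁ … cₙ` of `β`
such that consecutive elements of `a·c₁ … cₙ·b` are related by `hb ∪ po⁺`. -/
def hbThrough (τ : List (Act Tid D)) (i j : ℕ) : Prop :=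
  ∃ l : List ℕ, List.Chain' (· < ·) (i :: l ++ [j]) ∧ List.Chain' (hbStep τ) (i :: l ++ [j])

/-! ### Attacks and TSO witnesses -/

/-- An attack: an attacker thread, a store instruction and a load instruction. -/
structure Attack (Tid Lbl D : Type) : Type where
  attacker : Tid
  stinst : LInstr Lbl D
  ldinst : LInstr Lbl D

def isStoreInstr (li : LInstr Lbl D) : Prop := ∃ ae ve, li.ins = .store ae ve
def isLoadInstr (li : LInstr Lbl D) : Prop := ∃ r ae, li.ins = .load r ae

/-- The attack's instructions belong to the attacker thread and have the right
kinds. -/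
def ValidAttack (P : Program Tid Lbl D) (A : Attack Tid Lbl D) : Prop :=
  A.stinst ∈ (P.threads A.attacker).code ∧ isStoreInstr A.stinst ∧
  A.ldinst ∈ (P.threads A.attacker).code ∧ isLoadInstr A.ldinst

/-- The computation `τ₁ · isu · τ₂ · ld · τ₃ · st · τ₄` of a TSO witness. -/
def witnessWord (att : Tid) (τ₁ τ₂ τ₃ τ₄ : List (Act Tid D)) (aL vL aS vS : D) :
    List (Act Tid D) :=
  τ₁ ++ .issue att :: (τ₂ ++ .load att aL vL :: (τ₃ ++ .store att aS vS :: τ₄))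

/-- Conditions (W1)–(W5) for a TSO witness
`τ = τ₁ · isu_st · τ₂ · ld · τ₃ · st · τ₄` of the attack `A`:
(W1) only the attacker delays stores; (W2) `st` is an instance of `stinst` and
the first delayed store of the attacker, `ld` is an instance of `ldinst` and
the last action of the attacker overstepped by `st` (`τ₂` contains no fences
and no stores of the attacker); (W3) `ld hb⁺ a` for every action `a` in
`ld · τ₃ · st`; (W4) `τ₄` consists only of stores of the attacker issued
before `ld` and delayed past it; (W5) all these delayed stores have addresses
different from the address of `ld`. -/
def WitnessShape [Zero D] (P : Program Tid Lbl D) (A : Attack Tid Lbl D)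
    (τ₁ τ₂ τ₃ τ₄ : List (Act Tid D)) (aL vL aS vS : D) : Prop :=
  ValidAttack P A ∧
  aS ≠ aL ∧
  (let att := A.attacker
   let τ : List (Act Tid D) := witnessWord att τ₁ τ₂ τ₃ τ₄ aL vL aS vS
   let pIsu : ℕ := τ₁.length
   let pLd : ℕ := τ₁.length + 1 + τ₂.length
   let pSt : ℕ := τ₁.length + 1 + τ₂.length + 1 + τ₃.length
   -- τ is a TSO computation; the issue at pIsu stems from stinst, the load at
   -- pLd stems from ldinst, and the attacker executes no fence in between
   (∃ ρ c, Run P ρ c ∧ acts ρ = τ ∧ (∀ t, c.buf t = []) ∧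
      (∃ ev, ρ[pIsu]? = some ev ∧ ev.2 = some A.stinst) ∧
      (∃ ev, ρ[pLd]? = some ev ∧ ev.2 = some A.ldinst) ∧
      (∀ q, pIsu < q → q < pLd →
        ¬ ∃ li, ρ[q]? = some (Act.loc att, some li) ∧ li.ins = Instr.mfence)) ∧
   -- st is the store action corresponding to the issue action at pIsu
   issueOfStore τ pSt = some pIsu ∧
   -- (W1): the stores of all other threads immediately follow their issues
   (∀ t, t ≠ att → ∀ j a v, τ[j]? = some (.store t a v) → storeDelay τ j = 0) ∧
   -- (W2): st is the first delayed store of the attacker …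
   (∀ j a v, j < pSt → τ[j]? = some (.store att a v) → storeDelay τ j = 0) ∧
   -- … and τ₂ contains no stores of the attacker (ld is the last overstepped action)
   (∀ x ∈ τ₂, ¬ isStoreOf att x) ∧
   -- τ₃ contains only helper actions
   (∀ x ∈ τ₃, x.thread ≠ att) ∧
   -- (W3): ld happens-before every action in ld·τ₃·st
   (∀ q, pLd < q → q ≤ pSt → ∃ m n, nodeAt τ pLd = some m ∧ nodeAt τ q = some n ∧
      Relation.TransGen (traceOf τ).hb m n) ∧
   -- (W4): τ₄ consists only of stores of the attacker …
   (∀ x ∈ τ₄, ∃ a v, x = Act.store att a v ∧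
      -- (W5): … whose addresses differ from the address of ld
      a ≠ aL) ∧
   -- (W4): … that were issued before ld
   (∀ j, pSt < j → ∀ a v, τ[j]? = some (.store att a v) →
      ∃ i, issueOfStore τ j = some i ∧ i < pLd))

/-- A TSO witness for attack `A`. -/
def TSOWitness [Zero D] (P : Program Tid Lbl D) (A : Attack Tid Lbl D)
    (τ : List (Act Tid D)) : Prop :=
  ∃ τ₁ τ₂ τ₃ τ₄ aL vL aS vS,
    τ = witnessWord A.attacker τ₁ τ₂ τ₃ τ₄ aL vL aS vS ∧
    WitnessShape P A τ₁ τ₂ τ₃ τ₄ aL vL aS vS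

/-- A feasible attack: an attack admitting a TSO witness. -/
def FeasibleAttack [Zero D] (P : Program Tid Lbl D) (A : Attack Tid Lbl D) : Prop :=
  ValidAttack P A ∧ ∃ τ, TSOWitness P A τ
/-! ### The instrumentation (Section 5) -/

/-- The data domain of the instrumented program: base values, auxiliary delay
addresses `(a, d)` and tagged buffered values `(v, d)`, auxiliary
happens-before addresses `(a, hb)`, the fresh addresses `a_st`, `hb`, `suc`
(and the flag used in the parameterized instrumentation), access levels
(`acc 1` = load access, `acc 2` = store access; no access is the initial
value `0`), and the value `true`. -/
inductive IVal (D : Type) : Type where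
  | base (v : D)
  | dAddr (a : D)
  | dVal (v : D)
  | hbAddr (a : D)
  | aSt
  | hbFlag
  | sucFlag
  | attFlag
  | acc (k : ℕ)
  | tru

instance [Zero D] : Zero (IVal D) := ⟨.base 0⟩

/-- Read a base value (seeing through the delay tag). -/
def IVal.toD [Zero D] : IVal D → D
  | .base v => v
  | .dVal v => v
  | _ => (0 : D)

/-- Labels of the instrumented program: original labels, labels of the code
copy, and two kinds of fresh intermediate labels. -/
abbrev ILbl (Lbl : Type) : Type := Lbl ⊕ Lbl ⊕ (ℕ × ℕ × ℕ) ⊕ (Lbl × ℕ)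

def olbl : Lbl → ILbl Lbl := Sum.inl
def clbl : Lbl → ILbl Lbl := fun l => Sum.inr (Sum.inl l)
def nlbl : ℕ × ℕ × ℕ → ILbl Lbl := fun x => Sum.inr (Sum.inr (Sum.inl x))
def slbl : Lbl × ℕ → ILbl Lbl := fun x => Sum.inr (Sum.inr (Sum.inr x))

/-- Registers of the instrumented program: register `r` of the original
program becomes `r + 2`; registers `0`, `1` are the fresh auxiliary
registers. -/
def shiftRho [Zero D] (ρ : ℕ → IVal D) : ℕ → D := fun r => (ρ (r + 2)).toD

def liftE [Zero D] (e : (ℕ → D) → D) : (ℕ → IVal D) → IVal D :=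
  fun ρ => .base (e (shiftRho ρ))
def dAddrE [Zero D] (e : (ℕ → D) → D) : (ℕ → IVal D) → IVal D :=
  fun ρ => .dAddr (e (shiftRho ρ))
def dValE [Zero D] (e : (ℕ → D) → D) : (ℕ → IVal D) → IVal D :=
  fun ρ => .dVal (e (shiftRho ρ))
def hbAddrE [Zero D] (e : (ℕ → D) → D) : (ℕ → IVal D) → IVal D :=
  fun ρ => .hbAddr (e (shiftRho ρ))

def truE : (ℕ → IVal D) → IVal D := fun _ => .tru

/-- A condition as an expression: nonzero iff the condition holds. -/
def condE [Zero D] (p : (ℕ → IVal D) → Prop) : (ℕ → IVal D) → IVal D :=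
  fun ρ => if p ρ then .tru else .base 0

/-- Lift an instruction of the original program to the instrumented domain. -/
def liftInstr [Zero D] : Instr D → Instr (IVal D)
  | .load r ae => .load (r + 2) (liftE ae)
  | .store ae ve => .store (liftE ae) (liftE ve)
  | .mfence => .mfence
  | .assign r e => .assign (r + 2) (liftE e)
  | .assert e => .assert (liftE e)
  | .tas r ae ve => .tas (r + 2) (liftE ae) (liftE ve)

def liftLI [Zero D] (li : LInstr Lbl D) : LInstr (ILbl Lbl) (IVal D) :=
  ⟨olbl li.src, liftInstr li.ins, olbl li.dst⟩

/-- Instrumentation `⟪stinst⟫` of the attack's store (Equation (1)): execute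
the store on the auxiliary delay address, record the used address in `a_st`,
and move to the code copy. -/
def attMoveStore [Zero D] (st : LInstr Lbl D) : List (LInstr (ILbl Lbl) (IVal D)) :=
  match st.ins with
  | .store ae ve =>
      [⟨olbl st.src, .store (dAddrE ae) (dValE ve), nlbl (0, 0, 0)⟩,
       ⟨nlbl (0, 0, 0), .store (fun _ => .aSt) (liftE ae), clbl st.dst⟩]
  | _ => []

/-- Instrumentation `⟪ldinst⟫` of the attack's load (Equation (2)): check that
the load has not read its value early, raise the `hb` flag and set the
happens-before address of the load's address to load access; then the
attacker stops. -/
def attMoveLoad [Zero D] (ld : LInstr Lbl D) : List (LInstr (ILbl Lbl) (IVal D)) :=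
  match ld.ins with
  | .load _ ae =>
      [⟨clbl ld.src, .load 0 (dAddrE ae), nlbl (0, 1, 0)⟩,
       ⟨nlbl (0, 1, 0), .assert (condE fun ρ => ρ 0 = IVal.base 0), nlbl (0, 1, 1)⟩,
       ⟨nlbl (0, 1, 1), .store (fun _ => .hbFlag) truE, nlbl (0, 1, 2)⟩,
       ⟨nlbl (0, 1, 2), .store (hbAddrE ae) (fun _ => .acc 1), nlbl (0, 1, 3)⟩]
  | _ => []

/-- The attacker's code copy (Equations (3)–(6)): stores go to the auxiliary
delay addresses, loads read the buffered value from the delay address if there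
is one and memory otherwise, fences are deleted. -/
def attCopy [Zero D] (i : ℕ) (li : LInstr Lbl D) : List (LInstr (ILbl Lbl) (IVal D)) :=
  match li.ins with
  | .store ae ve => [⟨clbl li.src, .store (dAddrE ae) (dValE ve), clbl li.dst⟩]
  | .load r ae =>
      [⟨clbl li.src, .load 0 (dAddrE ae), nlbl (0, 2 + i, 0)⟩,
       ⟨nlbl (0, 2 + i, 0), .assert (condE fun ρ => ρ 0 = IVal.base 0), nlbl (0, 2 + i, 1)⟩,
       ⟨nlbl (0, 2 + i, 1), .load (r + 2) (liftE ae), clbl li.dst⟩,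
       ⟨nlbl (0, 2 + i, 0), .assert (condE fun ρ => ρ 0 ≠ IVal.base 0), nlbl (0, 2 + i, 2)⟩,
       ⟨nlbl (0, 2 + i, 2), .load (r + 2) (dAddrE ae), clbl li.dst⟩]
  | .mfence => []
  | .tas _ _ _ => []
  | ins => [⟨clbl li.src, liftInstr ins, clbl li.dst⟩]

/-- The instrumented attacker thread. -/
def attackerThread [Zero D] (st ld : LInstr Lbl D) (th : ThreadCode Lbl D) :
    ThreadCode (ILbl Lbl) (IVal D) :=
  ⟨th.nregs + 2, olbl th.init,
    th.code.map liftLI ++ attMoveStore st ++ attMoveLoad ld ++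
      (th.code.mapIdx fun i li => attCopy i li).flatten⟩

/-- Helpers executing the original code check that the `hb` flag has not been
raised (Equation (7)). -/
def helpGuard [Zero D] (i : ℕ) (li : LInstr Lbl D) : List (LInstr (ILbl Lbl) (IVal D)) :=
  [⟨olbl li.src, .load 0 (fun _ => .hbFlag), nlbl (1, i, 0)⟩,
   ⟨nlbl (1, i, 0), .assert (condE fun ρ => ρ 0 = IVal.base 0), nlbl (1, i, 1)⟩,
   ⟨nlbl (1, i, 1), liftInstr li.ins, olbl li.dst⟩]

/-- Transitions of a helper into its code copy (Equations (8), (9)): a load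
requires a previous store access to its address, a store requires at least a
load access and records a store access. -/
def helpMove [Zero D] (i : ℕ) (li : LInstr Lbl D) : List (LInstr (ILbl Lbl) (IVal D)) :=
  match li.ins with
  | .load r ae =>
      [⟨olbl li.src, .load 0 (hbAddrE ae), nlbl (1, i, 2)⟩,
       ⟨nlbl (1, i, 2), .assert (condE fun ρ => ρ 0 = IVal.acc 2), nlbl (1, i, 3)⟩,
       ⟨nlbl (1, i, 3), .load (r + 2) (liftE ae), clbl li.dst⟩]
  | .store ae ve =>
      [⟨olbl li.src, .load 0 (hbAddrE ae), nlbl (1, i, 2)⟩,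
       ⟨nlbl (1, i, 2), .assert (condE fun ρ => ρ 0 = IVal.acc 1 ∨ ρ 0 = IVal.acc 2),
          nlbl (1, i, 4)⟩,
       ⟨nlbl (1, i, 4), .store (liftE ae) (liftE ve), nlbl (1, i, 5)⟩,
       ⟨nlbl (1, i, 5), .store (hbAddrE ae) (fun _ => .acc 2), clbl li.dst⟩]
  | .tas r ae ve =>
      [⟨olbl li.src, .load 0 (hbAddrE ae), nlbl (1, i, 2)⟩,
       ⟨nlbl (1, i, 2), .assert (condE fun ρ => ρ 0 = IVal.acc 1 ∨ ρ 0 = IVal.acc 2),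
          nlbl (1, i, 4)⟩,
       ⟨nlbl (1, i, 4), .tas (r + 2) (liftE ae) (liftE ve), nlbl (1, i, 5)⟩,
       ⟨nlbl (1, i, 5), .store (hbAddrE ae) (fun _ => .acc 2), clbl li.dst⟩]
  | _ => []

/-- The helpers' code copy (Equations (10)–(12)): loads and stores maintain
the maximal access type on the auxiliary happens-before addresses. -/
def helpCopy [Zero D] (i : ℕ) (li : LInstr Lbl D) : List (LInstr (ILbl Lbl) (IVal D)) :=
  match li.ins with
  | .store ae ve =>
      [⟨clbl li.src, .store (liftE ae) (liftE ve), nlbl (1, i, 6)⟩,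
       ⟨nlbl (1, i, 6), .store (hbAddrE ae) (fun _ => .acc 2), clbl li.dst⟩]
  | .load r ae =>
      [⟨clbl li.src, .assign 0 (liftE ae), nlbl (1, i, 7)⟩,
       ⟨nlbl (1, i, 7), .load (r + 2) (fun ρ => ρ 0), nlbl (1, i, 8)⟩,
       ⟨nlbl (1, i, 8), .load 1 (fun ρ => .hbAddr ((ρ 0).toD)), nlbl (1, i, 9)⟩,
       ⟨nlbl (1, i, 9), .store (fun ρ => .hbAddr ((ρ 0).toD))
          (fun ρ => if ρ 1 = IVal.acc 2 then IVal.acc 2 else IVal.acc 1), clbl li.dst⟩]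
  | .tas r ae ve =>
      [⟨clbl li.src, .tas (r + 2) (liftE ae) (liftE ve), nlbl (1, i, 10)⟩,
       ⟨nlbl (1, i, 10), .store (hbAddrE ae) (fun _ => .acc 2), clbl li.dst⟩]
  | ins => [⟨clbl li.src, liftInstr ins, clbl li.dst⟩]

/-- The success check (Equation (13)), added at every label of the code copy:
if the happens-before address of the address recorded in `a_st` has been
accessed, raise the success flag. -/
def sucCheck [Zero D] (l : Lbl) : List (LInstr (ILbl Lbl) (IVal D)) :=
  [⟨clbl l, .load 0 (fun _ => .aSt), slbl (l, 0)⟩,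
   ⟨slbl (l, 0), .load 1 (fun ρ => .hbAddr ((ρ 0).toD)), slbl (l, 1)⟩,
   ⟨slbl (l, 1), .assert (condE fun ρ => ρ 1 ≠ IVal.base 0), slbl (l, 2)⟩,
   ⟨slbl (l, 2), .store (fun _ => .sucFlag) truE, slbl (l, 3)⟩]

/-- The instrumented helper thread. -/
def helperThread [Zero D] (th : ThreadCode Lbl D) : ThreadCode (ILbl Lbl) (IVal D) :=
  ⟨th.nregs + 2, olbl th.init,
    (th.code.mapIdx fun i li =>
      helpGuard i li ++ helpMove i li ++ helpCopy i li ++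
      sucCheck li.src ++ sucCheck li.dst).flatten⟩

/-- The program `P_A`: `P` instrumented for the attack `A`. -/
def instrument [Zero D] (P : Program Tid Lbl D) (A : Attack Tid Lbl D) :
    Program Tid (ILbl Lbl) (IVal D) :=
  ⟨fun t => if t = A.attacker then attackerThread A.stinst A.ldinst (P.threads t)
            else helperThread (P.threads t)⟩

/-- SC reachability of a configuration satisfying `G`. -/
def ReachSC [Zero D] (P : Program Tid Lbl D) (G : Conf Tid Lbl D → Prop) : Prop :=
  ∃ ρ c, Run P ρ c ∧ SCshape (acts ρ) ∧ G c

/-- The instrumented program reaches a goal configuration (a configuration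
with `val(suc) = true`) under SC. -/
def ReachGoalSC {Lbl' : Type} [Zero D] (P' : Program Tid Lbl' (IVal D)) : Prop :=
  ReachSC P' fun c => c.mem .sucFlag = .tru

/-! ### Parameterized programs and the parameterized instrumentation -/

/-- The instance `P(I)` of a parameterized program `P` with threads
`t₁, …, t_k`: it declares `I i` identical copies of thread `t_i`. -/
def instProg {k : ℕ} (P : Program (Fin k) Lbl D) (I : Fin k → ℕ) :
    Program (Σ i : Fin k, Fin (I i)) Lbl D :=
  ⟨fun ti => P.threads ti.1⟩

/-- A parameterized program is robust if all its instances are robust. -/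
def ParamRobust {k : ℕ} [Zero D] (P : Program (Fin k) Lbl D) : Prop :=
  ∀ I : Fin k → ℕ, Robust (instProg P I)

/-- In the parameterized instrumentation, the attacker's move to the code copy
additionally performs an atomic test-and-set of a fresh flag variable, so that
at most one copy of the attacker thread delays stores. -/
def attMoveStoreTas [Zero D] (st : LInstr Lbl D) : List (LInstr (ILbl Lbl) (IVal D)) :=
  match st.ins with
  | .store ae ve =>
      [⟨olbl st.src, .tas 0 (fun _ => .attFlag) truE, nlbl (0, 0, 1)⟩,
       ⟨nlbl (0, 0, 1), .assert (condE fun ρ => ρ 0 = IVal.base 0), nlbl (0, 0, 2)⟩,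
       ⟨nlbl (0, 0, 2), .store (dAddrE ae) (dValE ve), nlbl (0, 0, 0)⟩,
       ⟨nlbl (0, 0, 0), .store (fun _ => .aSt) (liftE ae), clbl st.dst⟩]
  | _ => []

/-- The attacker thread of the parameterized instrumentation: instrumented
both as an attacker (with the test-and-set guarded move) and as a helper. -/
def pAttackerThread [Zero D] (st ld : LInstr Lbl D) (th : ThreadCode Lbl D) :
    ThreadCode (ILbl Lbl) (IVal D) :=
  ⟨th.nregs + 2, olbl th.init,
    (th.code.mapIdx fun i li =>
      helpGuard i li ++ helpMove i li ++ helpCopy i li ++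
      sucCheck li.src ++ sucCheck li.dst).flatten ++
    attMoveStoreTas st ++ attMoveLoad ld ++
    (th.code.mapIdx fun i li => attCopy i li).flatten⟩

/-- The parameterized instrumentation `P_A` of a parameterized program. -/
def pinstrument {k : ℕ} [Zero D] (P : Program (Fin k) Lbl D) (A : Attack (Fin k) Lbl D) :
    Program (Fin k) (ILbl Lbl) (IVal D) :=
  ⟨fun t => if t = A.attacker then pAttackerThread A.stinst A.ldinst (P.threads t)
            else helperThread (P.threads t)⟩
/-! ### Fence insertion -/

/-- Inserting fences at the labels in `F`: each instruction from a label
`l ∈ F` is moved to the fresh label `l_f` (encoded `Sum.inr l`), and an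
`mfence` instruction from `l` to `l_f` is added. -/
def insertFences (P : Program Tid Lbl D) (F : Finset Lbl) :
    Program Tid (Lbl ⊕ Lbl) D :=
  ⟨fun t =>
    ⟨(P.threads t).nregs, Sum.inl (P.threads t).init,
      ((P.threads t).code.map fun li =>
        ⟨if li.src ∈ F then Sum.inr li.src else Sum.inl li.src, li.ins, Sum.inl li.dst⟩) ++
      F.toList.map fun l => ⟨Sum.inl l, Instr.mfence, Sum.inr l⟩⟩⟩

/-- A valid fence set: inserting fences at its labels yields a robust program. -/
def ValidFenceSet [Zero D] (P : Program Tid Lbl D) (F : Finset Lbl) : Prop :=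
  Robust (insertFences P F)

/-- An irreducible valid fence set: no strict subset is valid. -/
def IrreducibleFenceSet [Zero D] (P : Program Tid Lbl D) (F : Finset Lbl) : Prop :=
  ValidFenceSet P F ∧ ∀ F' ⊂ F, ¬ ValidFenceSet P F'

/-- The labelled instruction of the fenced program corresponding to a labelled
instruction of `P`. -/
def mapLI (F : Finset Lbl) (li : LInstr Lbl D) : LInstr (Lbl ⊕ Lbl) D :=
  ⟨if li.src ∈ F then Sum.inr li.src else Sum.inl li.src, li.ins, Sum.inl li.dst⟩

/-- The attack of the fenced program corresponding to an attack of `P`. -/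
def mapAttack (F : Finset Lbl) (A : Attack Tid Lbl D) : Attack Tid (Lbl ⊕ Lbl) D :=
  ⟨A.attacker, mapLI F A.stinst, mapLI F A.ldinst⟩

/-- `F` eliminates the attack `A`: after inserting the fences of `F`, the
attack admits no TSO witness. -/
def EliminatesAttack [Zero D] (P : Program Tid Lbl D) (F : Finset Lbl)
    (A : Attack Tid Lbl D) : Prop :=
  ¬ ∃ τ, TSOWitness (insertFences P F) (mapAttack F A) τ

/-- An irreducible eliminating fence set for attack `A`. -/
def IrredElim [Zero D] (P : Program Tid Lbl D) (F : Finset Lbl)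
    (A : Attack Tid Lbl D) : Prop :=
  EliminatesAttack P F A ∧ ∀ F' ⊂ F, ¬ EliminatesAttack P F' A

/-- The (finitely many) labels occurring in the program. -/
def labelsOf [Fintype Tid] (P : Program Tid Lbl D) : Finset Lbl :=
  Finset.univ.biUnion fun t =>
    (((P.threads t).code.map LInstr.src) ++ ((P.threads t).code.map LInstr.dst) ++
      [(P.threads t).init]).toFinset

/-- The cost of a fence set. -/
def fenceCost (c : Lbl → ℝ) (F : Finset Lbl) : ℝ := ∑ l ∈ F, c l

/-- A feasible point of the 0/1-ILP of Section 6.2: a 0/1 (Boolean) variable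
`xF F` for every irreducible eliminating fence set `F` of every feasible
attack and a 0/1 variable `xl l` for every label `l`, such that for every
feasible attack `A` some irreducible eliminating fence set for `A` is selected
(`∑ᵢ x_{Fᵢ} ≥ 1`), and whenever a set is selected all its labels are selected
(`∑_{l ∈ Fᵢ} x_l ≥ |Fᵢ| · x_{Fᵢ}`). -/
def ILPFeasiblePoint [Zero D] (P : Program Tid Lbl D)
    (xF : Finset Lbl → Bool) (xl : Lbl → Bool) : Prop :=
  (∀ A : Attack Tid Lbl D, FeasibleAttack P A →
      ∃ F, IrredElim P F A ∧ xF F = true) ∧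
  (∀ (A : Attack Tid Lbl D) (F : Finset Lbl), FeasibleAttack P A → IrredElim P F A →
      xF F = true → ∀ l ∈ F, xl l = true)

/-- The objective function `f(x) = ∑_l c(l) · x_l` of the ILP. -/
def ILPCost [Fintype Tid] (P : Program Tid Lbl D) (c : Lbl → ℝ) (xl : Lbl → Bool) : ℝ :=
  ∑ l ∈ labelsOf P, if xl l then c l else 0

/-! ### Petri nets and the counter abstraction -/

/-- A Petri net, given by its weight functions `pre` and `post`. -/
structure PetriNet (S T : Type) : Type where
  pre : S → T → ℕ
  post : T → S → ℕ

/-- A transition is enabled in a marking. -/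
def PetriNet.enabled (N : PetriNet S T) (m : S → ℕ) (t : T) : Prop :=
  ∀ s, N.pre s t ≤ m s

/-- Firing a transition. -/
def PetriNet.fire (N : PetriNet S T) (m : S → ℕ) (t : T) : S → ℕ :=
  fun s => m s - N.pre s t + N.post t s

/-- Reachability of a marking by a firing sequence. -/
inductive PetriNet.Reach (N : PetriNet S T) : (S → ℕ) → (S → ℕ) → Prop where
  | refl (m : S → ℕ) : PetriNet.Reach N m m
  | step (m : S → ℕ) (t : T) (m' : S → ℕ) :
      N.enabled m t → PetriNet.Reach N (N.fire m t) m' → PetriNet.Reach N m m'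

/-- Coverability of a marking. -/
def PetriNet.Coverable (N : PetriNet S T) (m₀ m : S → ℕ) : Prop :=
  ∃ m', PetriNet.Reach N m₀ m' ∧ ∀ s, m s ≤ m' s

/-- Expressions evaluate identically on register valuations that agree on the
declared registers `0, …, n-1`. -/
def ExprOK (n : ℕ) (e : (ℕ → D) → D) : Prop :=
  ∀ ρ ρ' : ℕ → D, (∀ r < n, ρ r = ρ' r) → e ρ = e ρ'

/-- An instruction only uses the declared registers. -/
def InstrOK (n : ℕ) : Instr D → Prop
  | .load r ae => r < n ∧ ExprOK n ae
  | .store ae ve => ExprOK n ae ∧ ExprOK n ve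
  | .mfence => True
  | .assign r e => r < n ∧ ExprOK n e
  | .assert e => ExprOK n e
  | .tas r ae ve => r < n ∧ ExprOK n ae ∧ ExprOK n ve

/-- All threads only use their declared registers. -/
def RegsBounded (P : Program Tid Lbl D) : Prop :=
  ∀ t, ∀ li ∈ (P.threads t).code, InstrOK (P.threads t).nregs li.ins

/-- Extension of a valuation of the declared registers by `0`. -/
def extV [Zero D] (n : ℕ) (vs : Fin n → D) : ℕ → D :=
  fun r => if h : r < n then vs ⟨r, h⟩ else 0

/-- Update of a valuation of the declared registers. -/
def updV {n : ℕ} (vs : Fin n → D) (r : ℕ) (v : D) : Fin n → D :=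
  fun q => if (q : ℕ) = r then v else vs q

section PN

variable {k : ℕ} (P : Program (Fin k) Lbl D)

/-- Places of the counter-abstraction Petri net: a place `p_{a,v}` for every
address `a` and value `v` (representing `val(a) = v`), and a place
`p_{i,l,v̄}` for every thread `i`, label `l` and valuation `v̄` of the declared
registers (counting the instances of thread `i` at control state `l` with
registers `v̄`). -/
def PNPlace : Type :=
  (D × D) ⊕ (Σ i : Fin k, Lbl × (Fin ((P.threads i).nregs) → D))

/-- Raw transitions: a spawn transition for every thread, and a transition for
every thread, instruction (index) and relevant valuation/value combination. -/
def PNTransRaw : Type :=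
  (Fin k) ⊕ (Σ i : Fin k, ℕ × ((Fin ((P.threads i).nregs) → D) × D))

variable [Zero D]

/-- Guard: the indexed instruction exists, and asserts only fire when their
condition evaluates to a nonzero value. -/
def PNGuard : PNTransRaw P → Prop
  | .inl _ => True
  | .inr ⟨i, j, vs, _⟩ =>
      match ((P.threads i).code)[j]? with
      | some li =>
          match li.ins with
          | .assert e => e (extV ((P.threads i).nregs) vs) ≠ 0
          | _ => True
      | none => False

def PNTrans : Type := {x : PNTransRaw P // PNGuard P x}

/-- The weight function `W(s, t)`. -/
def PNpre : PNPlace P → PNTrans P → ℕ := fun s t =>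
  match t.1 with
  | .inl _ => 0
  | .inr ⟨i, j, vs, v⟩ =>
      match ((P.threads i).code)[j]? with
      | none => 0
      | some li =>
          (if s = Sum.inr ⟨i, (li.src, vs)⟩ then 1 else 0) +
          (let ext := extV ((P.threads i).nregs) vs
           match li.ins with
           | .load _ ae => if s = Sum.inl (ae ext, v) then 1 else 0
           | .store ae _ => if s = Sum.inl (ae ext, v) then 1 else 0
           | .tas _ ae _ => if s = Sum.inl (ae ext, v) then 1 else 0
           | _ => 0)

/-- The weight function `W(t, s)`. -/
def PNpost : PNTrans P → PNPlace P → ℕ := fun t s =>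
  match t.1 with
  | .inl i => if s = Sum.inr ⟨i, ((P.threads i).init, fun _ => (0 : D))⟩ then 1 else 0
  | .inr ⟨i, j, vs, v⟩ =>
      match ((P.threads i).code)[j]? with
      | none => 0
      | some li =>
          let ext := extV ((P.threads i).nregs) vs
          match li.ins with
          | .load r ae =>
              (if s = Sum.inr ⟨i, (li.dst, updV vs r v)⟩ then 1 else 0) +
              (if s = Sum.inl (ae ext, v) then 1 else 0)
          | .store ae ve =>
              (if s = Sum.inr ⟨i, (li.dst, vs)⟩ then 1 else 0) +
              (if s = Sum.inl (ae ext, ve ext) then 1 else 0)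
          | .mfence => if s = Sum.inr ⟨i, (li.dst, vs)⟩ then 1 else 0
          | .assign r e => if s = Sum.inr ⟨i, (li.dst, updV vs r (e ext))⟩ then 1 else 0
          | .assert _ => if s = Sum.inr ⟨i, (li.dst, vs)⟩ then 1 else 0
          | .tas r ae ve =>
              (if s = Sum.inr ⟨i, (li.dst, updV vs r v)⟩ then 1 else 0) +
              (if s = Sum.inl (ae ext, ve ext) then 1 else 0)

/-- The counter-abstraction Petri net of a parameterized program. -/
def PNnet : PetriNet (PNPlace P) (PNTrans P) := ⟨PNpre P, PNpost P⟩

/-- The initial marking: one token on `p_{a,0}` for every address `a`. -/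
def PNm0 : PNPlace P → ℕ := fun s =>
  match s with
  | .inl (_, v) => if v = 0 then 1 else 0
  | .inr _ => 0

/-- The marking to be covered: one token on `p_{suc,true}`. -/
def PNmsuc (aSuc vTrue : D) : PNPlace P → ℕ := fun s =>
  if s = Sum.inl (aSuc, vTrue) then 1 else 0

end PN
/-- The action `a` appended to a computation; a store comes with its issue. -/
def apnd {Tid D : Type} (x : Act Tid D) : List (Act Tid D) :=
  match x with
  | .store t a v => [.issue t, .store t a v]
  | y => [y]


/-!
In an SC computation every issue is immediately followed by its store, so the trace nodes are
the loads, stores and local actions, ranked within their thread by position, and the source of a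
load is the last store to its address before it. Every `hb` edge then joins two dependent actions
(same thread, or same address with at least one store) in increasing position. Hence a path from
`a₁` to `a` ends with an edge from a dependent action lying between them, that is, in `a₁·τ₂`.
Conversely, a dependent action of `a₁·τ₂` is reached from `a₁` by hypothesis and reaches `a` by a
`po`, `so` or `cf` edge, or, when `a` is a load, through the last store before `a` and its `src`
edge.
-/

namespace Act

variable {t : Tid} {a v : D}

@[simp] lemma thread_issue : (issue t : Act Tid D).thread = t := rfl
@[simp] lemma thread_store : (store t a v).thread = t := rfl
@[simp] lemma thread_load : (load t a v).thread = t := rfl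
@[simp] lemma thread_loc : (loc t : Act Tid D).thread = t := rfl
@[simp] lemma isStore_store : (store t a v).isStore := trivial
@[simp] lemma not_isStore_issue : ¬ (issue t : Act Tid D).isStore := id
@[simp] lemma not_isStore_load : ¬ (load t a v).isStore := id
@[simp] lemma not_isStore_loc : ¬ (loc t : Act Tid D).isStore := id
@[simp] lemma isIssue_issue : (issue t : Act Tid D).isIssue := trivial
@[simp] lemma not_isIssue_store : ¬ (store t a v).isIssue := id
@[simp] lemma not_isIssue_load : ¬ (load t a v).isIssue := id
@[simp] lemma not_isIssue_loc : ¬ (loc t : Act Tid D).isIssue := id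

end Act

section Filter

variable {α : Type*}

lemma getElem?_filter_length_filter_take {l : List α} {q : α → Bool} {p : ℕ} {x : α}
    (hx : l[p]? = some x) (hq : q x) :
    (l.filter q)[((l.take p).filter q).length]? = some x := by
  obtain ⟨hp, rfl⟩ := List.getElem?_eq_some_iff.1 hx
  have hsplit : l.filter q = (l.take p).filter q ++ l[p] :: (l.drop (p + 1)).filter q := by
    conv_lhs => rw [← List.take_append_drop p l, List.drop_eq_getElem_cons hp]
    rw [List.filter_append, List.filter_cons_of_pos hq]
  rw [hsplit, List.getElem?_append_right le_rfl]
  simp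

lemma exists_getElem?_of_getElem?_filter {l : List α} {q : α → Bool} {r : ℕ} {z : α}
    (h : (l.filter q)[r]? = some z) :
    ∃ p, l[p]? = some z ∧ q z ∧ ((l.take p).filter q).length = r := by
  induction l generalizing r with
  | nil => simp at h
  | cons x l ih =>
    by_cases hx : q x
    · rw [List.filter_cons_of_pos hx] at h
      cases r with
      | zero => exact ⟨0, by simpa using h, by simp_all⟩
      | succ r =>
        obtain ⟨p, hp, hz, hlen⟩ := ih (by simpa using h)
        exact ⟨p + 1, by simpa using hp, hz, by simp [List.filter_cons_of_pos hx, hlen]⟩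
    · rw [List.filter_cons_of_neg hx] at h
      obtain ⟨p, hp, hz, hlen⟩ := ih h
      exact ⟨p + 1, by simpa using hp, hz, by simp [List.filter_cons_of_neg hx, hlen]⟩

end Filter

section Count

variable {τ : List (Act Tid D)} {p : Act Tid D → Prop}

lemma cntP_succ {i : ℕ} {x : Act Tid D} (hx : τ[i]? = some x) :
    cntP τ p (i + 1) = cntP τ p i + if p x then 1 else 0 := by
  rw [cntP, cntP, List.take_add_one, hx]
  by_cases hpx : p x <;> simp [hpx]

lemma cntP_mono {i j : ℕ} (h : i ≤ j) : cntP τ p i ≤ cntP τ p j :=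
  ((List.take_prefix_take_left h).filter _).length_le

lemma cntP_lt_cntP {i j : ℕ} {x : Act Tid D} (hx : τ[i]? = some x) (hpx : p x) (h : i < j) :
    cntP τ p i < cntP τ p j := by
  have := cntP_mono (τ := τ) (p := p) (Nat.succ_le_of_lt h)
  rw [cntP_succ hx, if_pos hpx] at this
  omega

lemma cntP_take_length (k : ℕ) : cntP (τ.take k) p (τ.take k).length = cntP τ p k := by
  rw [cntP, List.take_length]; rfl

lemma getElem?_filter_cntP {i : ℕ} {x : Act Tid D} (hx : τ[i]? = some x) (hpx : p x) :
    (τ.filter fun a => decide (p a))[cntP τ p i]? = some x :=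
  getElem?_filter_length_filter_take hx (by simpa using hpx)

lemma length_filter_range_eq_cntP (i : ℕ) :
    ((List.range i).filter fun j => decide (∃ a, τ[j]? = some a ∧ p a)).length = cntP τ p i := by
  induction i with
  | zero => simp [cntP]
  | succ i ih =>
    rw [List.range_succ, List.filter_append, List.length_append, ih]
    cases hx : τ[i]? with
    | none =>
      have : τ.length ≤ i := List.getElem?_eq_none_iff.1 hx
      simp [cntP, List.take_of_length_le this, List.take_of_length_le (Nat.le_succ_of_le this), hx]
    | some x => by_cases hpx : p x <;> simp [cntP_succ hx, hpx, hx]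

lemma posOfNth_cntP {i : ℕ} {x : Act Tid D} (hx : τ[i]? = some x) (hpx : p x) :
    posOfNth τ p (cntP τ p i) = some i := by
  have hi : i < τ.length := (List.getElem?_eq_some_iff.1 hx).1
  have hrange : List.range i = (List.range τ.length).take i := by
    rw [List.take_range, Nat.min_eq_left hi.le]
  rw [posOfNth, ← length_filter_range_eq_cntP, hrange]
  exact getElem?_filter_length_filter_take (by simp [hi]) (by simpa using ⟨x, hx, hpx⟩)

end Count

/-- The shape of the action sequences of SC computations (`SCComput.paired`). -/
inductive Paired : List (Act Tid D) → Prop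
  | nil : Paired []
  | load (t : Tid) (a v : D) {l : List (Act Tid D)} : Paired l → Paired (.load t a v :: l)
  | loc (t : Tid) {l : List (Act Tid D)} : Paired l → Paired (.loc t :: l)
  | issue_store (t : Tid) (a v : D) {l : List (Act Tid D)} :
      Paired l → Paired (.issue t :: .store t a v :: l)

lemma SCshape.tail {x : Act Tid D} {l : List (Act Tid D)} (h : SCshape (x :: l)) : SCshape l :=
  fun i t hi => by simpa using h (i + 1) t (by simpa using hi)

lemma Steps.paired [Zero D] {P : Program Tid Lbl D} {c c' : Conf Tid Lbl D}
    {ρ : List (Ev Tid Lbl D)} (h : Steps P c ρ c') :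
    ((∀ t, c.buf t = []) → SCshape (acts ρ) → Paired (acts ρ)) ∧
    (∀ t a v, c.buf t = [(a, v)] → (∀ t', t' ≠ t → c.buf t' = []) →
      SCshape (.issue t :: acts ρ) → Paired (.issue t :: acts ρ)) := by
  induction h with
  | refl => exact ⟨fun _ _ => .nil, fun t _ _ _ _ hsh => by simpa [acts] using hsh 0 t rfl⟩
  | trans c₁ ρ₁ c₂ ρ₂ c₃ hstep _ ih =>
    have hacts : acts (ρ₁ ++ ρ₂) = acts ρ₁ ++ acts ρ₂ := List.map_append ..
    rw [hacts]
    cases hstep with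
    | loadBuf t li r ae a v _ _ _ _ hv =>
      refine ⟨fun hbuf _ => ?_, fun _ _ _ _ _ hsh => ?_⟩
      · simp [hbuf t, bufVal] at hv
      · simpa [acts] using hsh 0 _ rfl
    | loadMem t li r ae a v =>
      exact ⟨fun hbuf hsh => .load t a v (ih.1 hbuf hsh.tail),
        fun _ _ _ _ _ hsh => by simpa [acts] using hsh 0 _ rfl⟩
    | storeIssue t li ae ve a v =>
      refine ⟨fun hbuf hsh => ih.2 t a v (by simp [updf, hbuf]) (fun t' ht => ?_) hsh,
        fun _ _ _ _ _ hsh => by simpa [acts] using hsh 0 _ rfl⟩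
      simp [updf, ht, hbuf]
    | flush t a v β hb =>
      refine ⟨fun hbuf _ => by simp [hbuf t] at hb, fun t' a' v' hbt hothers hsh => ?_⟩
      obtain rfl : t = t' := by
        by_contra hne
        simp [hothers t hne] at hb
      obtain ⟨rfl, rfl, rfl⟩ : a = a' ∧ v = v' ∧ β = [] := by simp_all
      refine .issue_store t a v (ih.1 (fun t' => ?_) hsh.tail.tail)
      by_cases ht : t' = t <;> simp [updf, ht, hothers]
    | fence t li | assign t li | assert t li =>
      exact ⟨fun hbuf hsh => .loc t (ih.1 hbuf hsh.tail),
        fun _ _ _ _ _ hsh => by simpa [acts] using hsh 0 _ rfl⟩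
    | tas t li r ae ve a vold vnew =>
      exact ⟨fun hbuf hsh => .load t a vold (.issue_store t a vnew (ih.1 hbuf hsh.tail.tail.tail)),
        fun _ _ _ _ _ hsh => by simpa [acts] using hsh 0 _ rfl⟩

lemma SCComput.paired [Zero D] {P : Program Tid Lbl D} {τ : List (Act Tid D)}
    (h : SCComput P τ) : Paired τ := by
  obtain ⟨⟨ρ, c, hrun, rfl, _⟩, hsh⟩ := h
  exact (Steps.paired hrun).1 (fun _ => rfl) hsh

namespace Paired

variable {σ : List (Act Tid D)}

lemma getElem?_succ_of_issue (h : Paired σ) {i : ℕ} {t : Tid}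
    (hi : σ[i]? = some (.issue t)) : ∃ a v, σ[i + 1]? = some (.store t a v) := by
  induction h generalizing i with
  | nil => simp at hi
  | load _ _ _ _ ih | loc _ _ ih =>
    cases i with
    | zero => simp at hi
    | succ i => simpa using ih (by simpa using hi)
  | issue_store t' a v _ ih =>
    match i with
    | 0 => obtain rfl : t' = t := by simpa using hi
           exact ⟨a, v, rfl⟩
    | 1 => simp at hi
    | i + 2 => simpa using ih (by simpa using hi)

lemma getElem?_pred_of_store (h : Paired σ) {j : ℕ} {t : Tid} {a v : D}
    (hj : σ[j]? = some (.store t a v)) : ∃ i, j = i + 1 ∧ σ[i]? = some (.issue t) := by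
  induction h generalizing j with
  | nil => simp at hj
  | load _ _ _ _ ih | loc _ _ ih =>
    cases j with
    | zero => simp at hj
    | succ j =>
      obtain ⟨i, rfl, hi⟩ := ih (by simpa using hj)
      exact ⟨i + 1, rfl, by simpa using hi⟩
  | issue_store t' a' v' _ ih =>
    match j with
    | 0 => simp at hj
    | 1 => obtain ⟨rfl, -, -⟩ : t' = t ∧ a' = a ∧ v' = v := by simpa using hj
           exact ⟨0, rfl, rfl⟩
    | j + 2 =>
      obtain ⟨i, rfl, hi⟩ := ih (by simpa using hj)
      exact ⟨i + 2, rfl, by simpa using hi⟩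

lemma take_succ (h : Paired σ) {p : ℕ} {x : Act Tid D} (hp : σ[p]? = some x)
    (hx : ¬ x.isIssue) : Paired (σ.take (p + 1)) := by
  induction h generalizing p with
  | nil => simp at hp
  | load t a v _ ih =>
    cases p with
    | zero => exact .load t a v (by simpa using Paired.nil)
    | succ p => exact .load t a v (ih (by simpa using hp))
  | loc t _ ih =>
    cases p with
    | zero => exact .loc t (by simpa using Paired.nil)
    | succ p => exact .loc t (ih (by simpa using hp))
  | issue_store t a v _ ih =>
    match p with
    | 0 => obtain rfl : Act.issue t = x := by simpa using hp
           exact absurd trivial hx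
    | 1 => exact .issue_store t a v (by simpa using Paired.nil)
    | p + 2 => exact .issue_store t a v (ih (by simpa using hp))

lemma cntP_nonstore_eq (h : Paired σ) (t : Tid) :
    cntP σ (fun y => y.thread = t ∧ ¬ y.isStore) σ.length =
      cntP σ (fun y => y.thread = t ∧ ¬ y.isIssue) σ.length := by
  simp only [cntP, List.take_length]
  induction h with
  | nil => rfl
  | load t' _ _ _ ih | loc t' _ ih =>
    by_cases ht : t' = t <;> simp_all
  | issue_store t' _ _ _ ih =>
    by_cases ht : t' = t <;> simp_all

lemma cntP_isStoreOf_eq (h : Paired σ) (t : Tid) :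
    cntP σ (isStoreOf t) σ.length = cntP σ (isIssueOf t) σ.length := by
  simp only [cntP, List.take_length]
  induction h with
  | nil => rfl
  | load t' _ _ _ ih | loc t' _ ih =>
    simp_all [isStoreOf, isIssueOf]
  | issue_store t' _ _ _ ih =>
    by_cases ht : t' = t <;> simp_all [isStoreOf, isIssueOf]

lemma threadNodes_eq (h : Paired σ) (t : Tid) :
    threadNodes σ t = σ.filter fun y => decide (y.thread = t ∧ ¬ y.isIssue) := by
  induction h with
  | nil => rfl
  | load t' _ _ _ ih | loc t' _ ih =>
    by_cases ht : t' = t <;> simp_all [threadNodes, isStoreOf, mergeStores]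
  | issue_store t' _ _ _ ih =>
    by_cases ht : t' = t <;> simp_all [threadNodes, isStoreOf, mergeStores]

lemma cntP_isStoreOf_succ (h : Paired σ) {i : ℕ} {t : Tid} {a v : D}
    (hi : σ[i]? = some (.issue t)) (hs : σ[i + 1]? = some (.store t a v)) :
    cntP σ (isStoreOf t) (i + 1) = cntP σ (isIssueOf t) i := by
  have hcount := (h.take_succ hs (by simp)).cntP_isStoreOf_eq t
  rw [cntP_take_length, cntP_take_length] at hcount
  rw [cntP_succ hs, cntP_succ hs, cntP_succ (p := isIssueOf t) hi] at hcount
  simpa [isStoreOf, isIssueOf] using hcount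

lemma issueOfStore_eq (h : Paired σ) {i : ℕ} {t : Tid} {a v : D}
    (hi : σ[i]? = some (.issue t)) (hs : σ[i + 1]? = some (.store t a v)) :
    issueOfStore σ (i + 1) = some i := by
  rw [issueOfStore, hs]
  dsimp only
  rw [h.cntP_isStoreOf_succ hi hs]
  exact posOfNth_cntP hi ⟨trivial, rfl⟩

lemma storeOfIssue_eq (h : Paired σ) {i : ℕ} {t : Tid} (hi : σ[i]? = some (.issue t)) :
    storeOfIssue σ i = some (i + 1) := by
  obtain ⟨a, v, hs⟩ := h.getElem?_succ_of_issue hi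
  rw [storeOfIssue, hi]
  dsimp only
  rw [← h.cntP_isStoreOf_succ hi hs]
  exact posOfNth_cntP hs ⟨trivial, rfl⟩

lemma not_pendingIssue (h : Paired σ) {t : Tid} {a : D} {p i : ℕ} : ¬ pendingIssue σ t a p i := by
  rintro ⟨hip, hi, j, v, hj, hpj, -⟩
  rw [h.storeOfIssue_eq hi, Option.some_inj] at hj
  omega

lemma nodeAt_issue (h : Paired σ) {i : ℕ} {t : Tid} (hi : σ[i]? = some (.issue t)) :
    nodeAt σ i = nodeAt σ (i + 1) := by
  obtain ⟨a, v, hs⟩ := h.getElem?_succ_of_issue hi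
  simp [nodeAt, hi, hs, h.issueOfStore_eq hi hs]

end Paired

/-- The number of trace nodes of thread `t` strictly before position `p`. -/
def nodeCount (σ : List (Act Tid D)) (t : Tid) (p : ℕ) : ℕ :=
  cntP σ (fun y => y.thread = t ∧ ¬ y.isIssue) p

/-- `p` is the position of the action labelling the node `n` (for a store node, of its store). -/
def IsNodePos (σ : List (Act Tid D)) (n : Tid × ℕ) (p : ℕ) : Prop :=
  ∃ x, σ[p]? = some x ∧ ¬ x.isIssue ∧ n = (x.thread, nodeCount σ x.thread p)

namespace IsNodePos

variable {σ : List (Act Tid D)} {m n : Tid × ℕ} {p q : ℕ}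

lemma fst_eq (hn : IsNodePos σ n p) {x : Act Tid D} (hx : σ[p]? = some x) : n.1 = x.thread := by
  obtain ⟨y, hy, -, rfl⟩ := hn
  rw [Option.some_inj.1 (hy.symm.trans hx)]

lemma lt_of_snd_lt (hm : IsNodePos σ m p) (hn : IsNodePos σ n q) (hth : m.1 = n.1)
    (hlt : m.2 < n.2) : p < q := by
  obtain ⟨x, -, -, rfl⟩ := hm
  obtain ⟨y, -, -, rfl⟩ := hn
  simp only at hth hlt
  rw [hth] at hlt
  by_contra! hle
  exact absurd hlt (not_lt.2 (cntP_mono hle))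

lemma snd_lt_of_lt (hm : IsNodePos σ m p) (hn : IsNodePos σ n q) (hth : m.1 = n.1)
    (hlt : p < q) : m.2 < n.2 := by
  obtain ⟨x, hx, hxi, rfl⟩ := hm
  obtain ⟨y, -, -, rfl⟩ := hn
  simp only at hth ⊢
  rw [← hth]
  exact cntP_lt_cntP hx ⟨rfl, hxi⟩ hlt

lemma unique (hp : IsNodePos σ n p) (hq : IsNodePos σ n q) : p = q := by
  by_contra hne
  rcases Nat.lt_or_gt_of_ne hne with hlt | hlt
  · exact (snd_lt_of_lt hp hq rfl hlt).ne rfl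
  · exact (snd_lt_of_lt hq hp rfl hlt).ne rfl

lemma eq_of_isNodePos (hm : IsNodePos σ m p) (hn : IsNodePos σ n p) : m = n := by
  obtain ⟨x, hx, -, rfl⟩ := hm
  obtain ⟨y, hy, -, rfl⟩ := hn
  rw [Option.some_inj.1 (hx.symm.trans hy)]

lemma lt_length (hn : IsNodePos σ n p) : p < σ.length := by
  obtain ⟨x, hx, -⟩ := hn
  exact (List.getElem?_eq_some_iff.1 hx).1

end IsNodePos

lemma isNodePos_append_iff {σ : List (Act Tid D)} (ext : List (Act Tid D)) {n : Tid × ℕ} {p : ℕ}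
    (hp : p < σ.length) : IsNodePos (σ ++ ext) n p ↔ IsNodePos σ n p := by
  simp only [IsNodePos, nodeCount, cntP, List.getElem?_append_left hp,
    List.take_append_of_le_length hp.le]

lemma IsNodePos.append {σ : List (Act Tid D)} {n : Tid × ℕ} {p : ℕ} (h : IsNodePos σ n p)
    (ext : List (Act Tid D)) : IsNodePos (σ ++ ext) n p :=
  (isNodePos_append_iff ext h.lt_length).2 h

lemma nodeAt_fst {σ : List (Act Tid D)} {p : ℕ} {x : Act Tid D} {m : Tid × ℕ}
    (hx : σ[p]? = some x) (hm : nodeAt σ p = some m) : m.1 = x.thread := by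
  cases x <;> simp only [nodeAt, hx, Option.map_eq_some_iff, Option.some_inj] at hm
  · rw [← hm]
  · obtain ⟨_, -, rfl⟩ := hm
    rfl
  all_goals rw [← hm]

namespace Paired

variable {σ : List (Act Tid D)} {m n : Tid × ℕ} {p q : ℕ}

/-- `nodeAt` ranks a node among the non-store actions of its thread; at a non-issue position this
agrees with its rank among the non-issue ones, as the issues and stores before it are paired. -/
lemma nodeAt_eq (h : Paired σ) {x : Act Tid D} (hp : σ[p]? = some x)
    (hx : ¬ x.isIssue) : nodeAt σ p = some (x.thread, nodeCount σ x.thread p) := by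
  have hcount := (h.take_succ hp hx).cntP_nonstore_eq x.thread
  rw [cntP_take_length, cntP_take_length] at hcount
  cases x with
  | issue t => simp at hx
  | store t a v =>
    obtain ⟨i, rfl, hi⟩ := h.getElem?_pred_of_store hp
    rw [cntP_succ hp, cntP_succ hp, cntP_succ hi] at hcount
    have hrank : cntP σ (fun y => y.thread = t ∧ ¬ y.isStore) i = nodeCount σ t (i + 1) := by
      simpa [nodeCount] using hcount
    simp only [nodeAt, hp, h.issueOfStore_eq hi hp, rankAt, hi, Option.map_some,
      Act.thread_issue, Act.thread_store, hrank]
  | load t a v | loc t =>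
    rw [cntP_succ hp, cntP_succ hp] at hcount
    simp only [nodeAt, hp, rankAt, nodeCount]
    simpa using hcount

lemma isNodePos_iff (h : Paired σ) {x : Act Tid D} (hp : σ[p]? = some x) (hx : ¬ x.isIssue) :
    IsNodePos σ n p ↔ nodeAt σ p = some n := by
  rw [h.nodeAt_eq hp hx, Option.some_inj, eq_comm]
  exact ⟨fun ⟨y, hy, _, hn⟩ => by rw [hn, Option.some_inj.1 (hy.symm.trans hp)],
    fun hn => ⟨x, hp, hx, hn⟩⟩

lemma nodeAt_of_isNodePos (h : Paired σ) (hn : IsNodePos σ n p) : nodeAt σ p = some n := by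
  obtain ⟨x, hx, hxi, -⟩ := id hn
  exact (h.isNodePos_iff hx hxi).1 hn

lemma exists_isNodePos (h : Paired σ) (hp : p < σ.length) :
    ∃ n q, nodeAt σ p = some n ∧ IsNodePos σ n q ∧ p ≤ q ∧ q ≤ p + 1 ∧ q < σ.length := by
  obtain ⟨x, hx⟩ : ∃ x, σ[p]? = some x := ⟨σ[p], List.getElem?_eq_getElem hp⟩
  by_cases hxi : x.isIssue
  · obtain ⟨t, rfl⟩ : ∃ t, x = .issue t := by cases x <;> simp_all
    obtain ⟨a, v, hs⟩ := h.getElem?_succ_of_issue hx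
    refine ⟨(t, nodeCount σ t (p + 1)), p + 1, ?_, ⟨_, hs, by simp, rfl⟩, by omega, le_rfl,
      (List.getElem?_eq_some_iff.1 hs).1⟩
    rw [h.nodeAt_issue hx, h.nodeAt_eq hs (by simp), Act.thread_store]
  · exact ⟨_, p, h.nodeAt_eq hx hxi, ⟨x, hx, hxi, rfl⟩, le_rfl, by omega, hp⟩

lemma labAt_eq (h : Paired σ) (hn : IsNodePos σ n p) {x : Act Tid D} (hx : σ[p]? = some x) :
    (traceOf σ).labAt n = some x := by
  obtain ⟨y, hy, hyi, rfl⟩ := hn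
  obtain rfl := Option.some_inj.1 (hy.symm.trans hx)
  change (threadNodes σ y.thread)[nodeCount σ y.thread p]? = some y
  rw [h.threadNodes_eq, nodeCount]
  convert getElem?_filter_cntP (p := fun z => z.thread = y.thread ∧ ¬ z.isIssue) hx ⟨rfl, hyi⟩

lemma exists_isNodePos_of_labAt (h : Paired σ) {z : Act Tid D}
    (hz : (traceOf σ).labAt n = some z) : ∃ p, IsNodePos σ n p ∧ σ[p]? = some z := by
  change (threadNodes σ n.1)[n.2]? = some z at hz
  rw [h.threadNodes_eq] at hz
  obtain ⟨p, hp, hq, hr⟩ := exists_getElem?_of_getElem?_filter hz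
  simp only [decide_eq_true_eq] at hq
  refine ⟨p, ⟨z, hp, hq.2, Prod.ext hq.1.symm ?_⟩, hp⟩
  rw [hq.1, ← hr, nodeCount, cntP]
  -- the two filters differ only in their `Decidable` instances
  congr
  funext y
  congr

lemma exists_isNodePos_of_lt_length (h : Paired σ) (hn : n.2 < ((traceOf σ).lab n.1).length) :
    ∃ p, IsNodePos σ n p :=
  let ⟨p, hp, _⟩ := h.exists_isNodePos_of_labAt (List.getElem?_eq_getElem hn)
  ⟨p, hp⟩

end Paired

inductive Dependent : Act Tid D → Act Tid D → Prop
  | thread {x y : Act Tid D} : x.thread = y.thread → Dependent x y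
  | store_load (t t' : Tid) (a v v' : D) : Dependent (.store t a v) (.load t' a v')
  | load_store (t t' : Tid) (a v v' : D) : Dependent (.load t a v) (.store t' a v')
  | store_store (t t' : Tid) (a v v' : D) : Dependent (.store t a v) (.store t' a v')

def IsLastStoreBefore (σ : List (Act Tid D)) (adr : D) (p j : ℕ) : Prop :=
  j < p ∧ (∃ t v, σ[j]? = some (.store t adr v)) ∧
    ∀ j', j' < p → (∃ t v, σ[j']? = some (.store t adr v)) → j' ≤ j

section LastStore

variable {σ : List (Act Tid D)} {adr : D} {p j : ℕ}

lemma exists_isLastStoreBefore (hj : ∃ t v, σ[j]? = some (.store t adr v)) (hjp : j < p) :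
    ∃ js, j ≤ js ∧ IsLastStoreBefore σ adr p js := by
  let Q := fun i : ℕ => ∃ (t : Tid) (v : D), σ[i]? = some (Act.store t adr v)
  have hle : j ≤ p - 1 := by omega
  refine ⟨Nat.findGreatest Q (p - 1), Nat.le_findGreatest hle hj, ?_,
    Nat.findGreatest_spec (P := Q) hle hj, fun j' hj' hQ => Nat.le_findGreatest (by omega) hQ⟩
  have := Nat.findGreatest_le (P := Q) (p - 1)
  omega

lemma isLastStoreBefore_append_iff (ext : List (Act Tid D)) (hp : p ≤ σ.length) :
    IsLastStoreBefore (σ ++ ext) adr p j ↔ IsLastStoreBefore σ adr p j := by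
  have hpos : ∀ i < p, (σ ++ ext)[i]? = σ[i]? := fun i hi =>
    List.getElem?_append_left (by omega)
  unfold IsLastStoreBefore
  constructor
  · rintro ⟨hjp, hj, hmax⟩
    exact ⟨hjp, by rwa [hpos j hjp] at hj, fun j' hj' h' => hmax j' hj' (by rwa [hpos j' hj'])⟩
  · rintro ⟨hjp, hj, hmax⟩
    exact ⟨hjp, by rwa [hpos j hjp], fun j' hj' h' => hmax j' hj' (by rwa [hpos j' hj'] at h')⟩

end LastStore

namespace Paired

variable {σ : List (Act Tid D)} {m n : Tid × ℕ}

lemma soRel_iff (h : Paired σ) :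
    soRel σ m n ↔ ∃ i j adr, i < j ∧ (∃ t v, σ[i]? = some (.store t adr v)) ∧
      (∃ t v, σ[j]? = some (.store t adr v)) ∧ IsNodePos σ m i ∧ IsNodePos σ n j := by
  constructor
  · rintro ⟨i, j, adr, hij, ⟨t, v, hi⟩, ⟨t', v', hj⟩, hm, hn⟩
    exact ⟨i, j, adr, hij, ⟨t, v, hi⟩, ⟨t', v', hj⟩, (h.isNodePos_iff hi (by simp)).2 hm,
      (h.isNodePos_iff hj (by simp)).2 hn⟩
  · rintro ⟨i, j, adr, hij, hi, hj, hm, hn⟩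
    exact ⟨i, j, adr, hij, hi, hj, h.nodeAt_of_isNodePos hm, h.nodeAt_of_isNodePos hn⟩

/-- In an SC computation no store is pending, so every load reads from the last store before it. -/
lemma srcRel_iff (h : Paired σ) :
    srcRel σ m n ↔ ∃ p j t adr v, σ[p]? = some (.load t adr v) ∧ IsNodePos σ n p ∧
      IsLastStoreBefore σ adr p j ∧ IsNodePos σ m j := by
  constructor
  · rintro ⟨p, t, adr, v, hp, hn, ⟨i, hi, -⟩ | ⟨-, j, hjp, ⟨t', v', hj⟩, hmax, hm⟩⟩
    · exact absurd hi h.not_pendingIssue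
    · exact ⟨p, j, t, adr, v, hp, (h.isNodePos_iff hp (by simp)).2 hn, ⟨hjp, ⟨t', v', hj⟩, hmax⟩,
        (h.isNodePos_iff hj (by simp)).2 hm⟩
  · rintro ⟨p, j, t, adr, v, hp, hn, ⟨hjp, hj, hmax⟩, hm⟩
    exact ⟨p, t, adr, v, hp, h.nodeAt_of_isNodePos hn,
      .inr ⟨fun ⟨_, hi⟩ => h.not_pendingIssue hi, j, hjp, hj, hmax, h.nodeAt_of_isNodePos hm⟩⟩

end Paired

def DependentBefore (σ : List (Act Tid D)) (m n : Tid × ℕ) : Prop :=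
  ∃ p q x y, IsNodePos σ m p ∧ IsNodePos σ n q ∧ σ[p]? = some x ∧ σ[q]? = some y ∧ p < q ∧
    Dependent x y

namespace Paired

variable {σ ext : List (Act Tid D)} {m n : Tid × ℕ}

lemma dependentBefore_of_po (h : Paired σ) (hmn : (traceOf σ).po m n) : DependentBefore σ m n := by
  obtain ⟨hth, hlt, hlen⟩ := hmn
  obtain ⟨q, hq⟩ := h.exists_isNodePos_of_lt_length hlen
  obtain ⟨p, hp⟩ := h.exists_isNodePos_of_lt_length (n := m) (by rw [hth]; omega)
  obtain ⟨x, hx, -, rfl⟩ := id hp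
  obtain ⟨y, hy, -, rfl⟩ := id hq
  exact ⟨p, q, x, y, hp, hq, hx, hy, hp.lt_of_snd_lt hq hth hlt, .thread hth⟩

/-- A load precedes every store it conflicts with: a store to its address between the two would
be its source, and it would then have to precede that store in store order. -/
lemma dependentBefore_of_cf (h : Paired σ) (hmn : (traceOf σ).cf m n) : DependentBefore σ m n := by
  obtain ⟨adr, ⟨t, v, hm⟩, ⟨t', v', hn⟩, hsrc⟩ := hmn
  obtain ⟨p, hp, hpx⟩ := h.exists_isNodePos_of_labAt hm
  obtain ⟨q, hq, hqy⟩ := h.exists_isNodePos_of_labAt hn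
  refine ⟨p, q, _, _, hp, hq, hpx, hqy, ?_, .load_store ..⟩
  by_contra! hqp
  have hqp : q < p := lt_of_le_of_ne hqp (by rintro rfl; simp [hpx] at hqy)
  rcases hsrc with ⟨s, hs, hso⟩ | hnone
  · obtain ⟨p', j, t'', adr', v'', hp', hm', hlast, hs'⟩ := h.srcRel_iff.1 hs
    obtain rfl := hm'.unique hp
    obtain rfl : adr' = adr := by simp_all
    obtain ⟨i, j', -, hij, -, -, hi, hj'⟩ := h.soRel_iff.1 hso
    obtain rfl := hi.unique hs'
    obtain rfl := hq.unique hj'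
    have := hlast.2.2 q hqp ⟨t', v', hqy⟩
    omega
  · obtain ⟨js, -, hlast⟩ := exists_isLastStoreBefore ⟨t', v', hqy⟩ hqp
    obtain ⟨t'', v'', hjs⟩ := hlast.2.1
    exact hnone ⟨_, h.srcRel_iff.2 ⟨p, js, t, adr, v, hpx, hp, hlast, _, hjs, by simp, rfl⟩⟩

lemma dependentBefore_of_hb (h : Paired σ) (hmn : (traceOf σ).hb m n) :
    DependentBefore σ m n := by
  rcases hmn with hpo | hso | hsrc | hcf
  · exact h.dependentBefore_of_po hpo
  · obtain ⟨i, j, adr, hij, ⟨t, v, hi⟩, ⟨t', v', hj⟩, hm, hn⟩ := h.soRel_iff.1 hso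
    exact ⟨i, j, _, _, hm, hn, hi, hj, hij, .store_store ..⟩
  · obtain ⟨p, j, t, adr, v, hp, hn, ⟨hjp, ⟨t', v', hj⟩, -⟩, hm⟩ := h.srcRel_iff.1 hsrc
    exact ⟨j, p, _, _, hm, hn, hj, hp, hjp, .store_load ..⟩
  · exact h.dependentBefore_of_cf hcf

lemma le_of_reflTransGen (h : Paired σ) (hmn : Relation.ReflTransGen (traceOf σ).hb m n)
    {p q : ℕ} (hm : IsNodePos σ m p) (hn : IsNodePos σ n q) : p ≤ q := by
  induction hmn generalizing q with
  | refl => exact (hm.unique hn).le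
  | tail _ hbc ih =>
    obtain ⟨p', q', -, -, hb, hc, -, -, hlt, -⟩ := h.dependentBefore_of_hb hbc
    have := ih hb
    have := hc.unique hn
    omega

lemma nodeAt_append (h : Paired σ) (he : Paired (σ ++ ext)) {p : ℕ} (hp : p < σ.length) :
    nodeAt (σ ++ ext) p = nodeAt σ p := by
  have key : ∀ q x, σ[q]? = some x → ¬ x.isIssue → nodeAt (σ ++ ext) q = nodeAt σ q :=
    fun q x hx hxi => by
      rw [h.nodeAt_eq hx hxi]
      exact he.nodeAt_of_isNodePos (IsNodePos.append ⟨x, hx, hxi, rfl⟩ ext)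
  obtain ⟨x, hx⟩ : ∃ x, σ[p]? = some x := ⟨σ[p], List.getElem?_eq_getElem hp⟩
  by_cases hxi : x.isIssue
  · obtain ⟨t, rfl⟩ : ∃ t, x = .issue t := by cases x <;> simp_all
    obtain ⟨a, v, hs⟩ := h.getElem?_succ_of_issue hx
    rw [he.nodeAt_issue (by rwa [List.getElem?_append_left hp]), h.nodeAt_issue hx,
      key _ _ hs (by simp)]
  · exact key p x hx hxi

lemma soRel_append (h : Paired σ) (he : Paired (σ ++ ext)) (hmn : soRel σ m n) :
    soRel (σ ++ ext) m n := by
  obtain ⟨i, j, adr, hij, ⟨t, v, hi⟩, ⟨t', v', hj⟩, hm, hn⟩ := h.soRel_iff.1 hmn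
  have hjσ := hn.lt_length
  exact he.soRel_iff.2 ⟨i, j, adr, hij, ⟨t, v, by rwa [List.getElem?_append_left (by omega)]⟩,
    ⟨t', v', by rwa [List.getElem?_append_left hjσ]⟩, hm.append ext, hn.append ext⟩

lemma srcRel_append_iff (h : Paired σ) (he : Paired (σ ++ ext)) {p : ℕ} (hn : IsNodePos σ n p) :
    srcRel (σ ++ ext) m n ↔ srcRel σ m n := by
  have hpσ := hn.lt_length
  rw [he.srcRel_iff, h.srcRel_iff]
  constructor
  · rintro ⟨p', j, t, adr, v, hp', hn', hlast, hm⟩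
    obtain rfl := (hn.append ext).unique hn'
    rw [isLastStoreBefore_append_iff ext hpσ.le] at hlast
    exact ⟨p, j, t, adr, v, by rwa [List.getElem?_append_left hpσ] at hp', hn, hlast,
      (isNodePos_append_iff ext (by have := hlast.1; omega)).1 hm⟩
  · rintro ⟨p', j, t, adr, v, hp', hn', hlast, hm⟩
    obtain rfl := hn.unique hn'
    exact ⟨p, j, t, adr, v, by rwa [List.getElem?_append_left hpσ], hn.append ext,
      (isLastStoreBefore_append_iff ext hpσ.le).2 hlast, hm.append ext⟩

lemma cf_append (h : Paired σ) (he : Paired (σ ++ ext)) (hmn : (traceOf σ).cf m n) :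
    (traceOf (σ ++ ext)).cf m n := by
  obtain ⟨adr, ⟨t, v, hm⟩, ⟨t', v', hn⟩, hsrc⟩ := hmn
  obtain ⟨p, hp, hpx⟩ := h.exists_isNodePos_of_labAt hm
  obtain ⟨q, hq, hqy⟩ := h.exists_isNodePos_of_labAt hn
  have hpσ := hp.lt_length
  have hqσ := hq.lt_length
  refine ⟨adr, ⟨t, v, he.labAt_eq (hp.append ext) (by rwa [List.getElem?_append_left hpσ])⟩,
    ⟨t', v', he.labAt_eq (hq.append ext) (by rwa [List.getElem?_append_left hqσ])⟩, ?_⟩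
  simp only [traceOf] at hsrc ⊢
  simp only [h.srcRel_append_iff he hp]
  exact hsrc.imp (fun ⟨s, hs, hso⟩ => ⟨s, hs, h.soRel_append he hso⟩) id

lemma hb_append (h : Paired σ) (he : Paired (σ ++ ext)) (hmn : (traceOf σ).hb m n) :
    (traceOf (σ ++ ext)).hb m n := by
  rcases hmn with ⟨hth, hlt, hlen⟩ | hso | hsrc | hcf
  · refine .inl ⟨hth, hlt, lt_of_lt_of_le hlen ?_⟩
    simp only [traceOf, h.threadNodes_eq, he.threadNodes_eq, List.filter_append,
      List.length_append]
    omega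
  · exact .inr (.inl (h.soRel_append he hso))
  · obtain ⟨p, -, -, -, -, -, hn, -⟩ := h.srcRel_iff.1 hsrc
    exact .inr (.inr (.inl ((h.srcRel_append_iff he hn).2 hsrc)))
  · exact .inr (.inr (.inr (h.cf_append he hcf)))

lemma reflTransGen_hb_of_dependent (h : Paired σ) {q r : ℕ} {x y : Act Tid D}
    (hx : σ[q]? = some x) (hy : σ[r]? = some y) (hqr : q < r) (hdep : Dependent x y)
    (hm : nodeAt σ q = some m) (hn : IsNodePos σ n r) :
    Relation.ReflTransGen (traceOf σ).hb m n := by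
  cases hdep with
  | thread hth =>
    obtain ⟨m', q', hm', hq', hqq', hq'q, -⟩ :=
      h.exists_isNodePos (List.getElem?_eq_some_iff.1 hx).1
    obtain rfl := Option.some_inj.1 (hm'.symm.trans hm)
    rcases (show q' ≤ r by omega).lt_or_eq with hlt | rfl
    · have hth' : m'.1 = n.1 := by rw [nodeAt_fst hx hm, hth, hn.fst_eq hy]
      refine .single (.inl ⟨hth', hq'.snd_lt_of_lt hn hth' hlt, ?_⟩)
      exact (List.getElem?_eq_some_iff.1 (h.labAt_eq hn hy)).1
    · rw [hq'.eq_of_isNodePos hn]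
  | store_load t t' a v v' =>
    have hm' : IsNodePos σ m q := (h.isNodePos_iff hx (by simp)).2 hm
    obtain ⟨js, hqjs, hlast⟩ := exists_isLastStoreBefore ⟨t, v, hx⟩ hqr
    obtain ⟨t'', v'', hjs⟩ := hlast.2.1
    have hs : IsNodePos σ (t'', nodeCount σ t'' js) js := ⟨_, hjs, by simp, rfl⟩
    have hsrc : (traceOf σ).hb (t'', nodeCount σ t'' js) n :=
      .inr (.inr (.inl (h.srcRel_iff.2 ⟨r, js, t', a, v', hy, hn, hlast, hs⟩)))
    rcases hqjs.lt_or_eq with hlt | rfl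
    · have hso := h.soRel_iff.2 ⟨q, js, a, hlt, ⟨t, v, hx⟩, ⟨t'', v'', hjs⟩, hm', hs⟩
      exact .tail (.single (.inr (.inl hso))) hsrc
    · rw [hm'.eq_of_isNodePos hs]
      exact .single hsrc
  | load_store t t' a v v' =>
    have hm' : IsNodePos σ m q := (h.isNodePos_iff hx (by simp)).2 hm
    refine .single (.inr (.inr (.inr
      ⟨a, ⟨t, v, h.labAt_eq hm' hx⟩, ⟨t', v', h.labAt_eq hn hy⟩, ?_⟩)))
    by_cases hst : ∃ j, j < q ∧ ∃ t'' v'', σ[j]? = some (.store t'' a v'')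
    · obtain ⟨j, hjq, hj⟩ := hst
      obtain ⟨js, -, hlast⟩ := exists_isLastStoreBefore hj hjq
      obtain ⟨t'', v'', hjs⟩ := hlast.2.1
      have hs : IsNodePos σ (t'', nodeCount σ t'' js) js := ⟨_, hjs, by simp, rfl⟩
      exact .inl ⟨_, h.srcRel_iff.2 ⟨q, js, t, a, v, hx, hm', hlast, hs⟩,
        h.soRel_iff.2 ⟨js, r, a, by have := hlast.1; omega, ⟨t'', v'', hjs⟩, ⟨t', v', hy⟩, hs, hn⟩⟩
    · refine .inr fun ⟨s, hs⟩ => hst ?_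
      obtain ⟨p, j, t'', a', v'', hp, hmp, hlast, -⟩ := h.srcRel_iff.1 hs
      obtain rfl := hm'.unique hmp
      obtain rfl : a' = a := by simp_all
      exact ⟨j, hlast.1, hlast.2.1⟩
  | store_store t t' a v v' =>
    have hm' : IsNodePos σ m q := (h.isNodePos_iff hx (by simp)).2 hm
    exact .single (.inr (.inl (h.soRel_iff.2 ⟨q, r, a, hqr, ⟨t, v, hx⟩, ⟨t', v', hy⟩, hm', hn⟩)))

end Paired

lemma getElem?_append_apnd (σ : List (Act Tid D)) {a : Act Tid D} (ha : ¬ a.isIssue) :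
    σ.length ≤ (σ ++ apnd a).length - 1 ∧ (σ ++ apnd a)[(σ ++ apnd a).length - 1]? = some a ∧
      ∀ p, σ.length ≤ p → p < (σ ++ apnd a).length - 1 →
        ∃ t, (σ ++ apnd a)[p]? = some (.issue t) := by
  cases a with
  | issue t => simp at ha
  | store t adr v =>
    refine ⟨by simp [apnd], by simp [apnd], fun p hp hlt => ⟨t, ?_⟩⟩
    obtain rfl : p = σ.length := by
      simp only [apnd, List.length_append, List.length_cons, List.length_nil] at hlt
      omega
    simp [apnd]
  | load | loc =>
    refine ⟨by simp [apnd], by simp [apnd], fun p hp hlt => ?_⟩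
    simp only [apnd, List.length_append, List.length_singleton] at hlt
    omega

namespace Paired

variable {σ : List (Act Tid D)} {a : Act Tid D}

lemma exists_dependent_of_reflTransGen (h : Paired σ) (he : Paired (σ ++ apnd a))
    (ha : ¬ a.isIssue) {p₀ : ℕ} (hp₀ : p₀ < σ.length) {m n : Tid × ℕ}
    (hm : nodeAt (σ ++ apnd a) p₀ = some m)
    (hn : nodeAt (σ ++ apnd a) ((σ ++ apnd a).length - 1) = some n)
    (hmn : Relation.ReflTransGen (traceOf (σ ++ apnd a)).hb m n) :
    ∃ q x, p₀ ≤ q ∧ q < σ.length ∧ σ[q]? = some x ∧ Dependent x a := by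
  obtain ⟨hlen, hlast, hissue⟩ := getElem?_append_apnd σ ha
  have hnN := (he.isNodePos_iff hlast ha).2 hn
  obtain ⟨m', q₀, hm', hq₀, hpq₀, -, hq₀σ⟩ := h.exists_isNodePos hp₀
  rw [← h.nodeAt_append he hp₀, hm, Option.some_inj] at hm'
  subst hm'
  replace hq₀ := hq₀.append (apnd a)
  rcases hmn.cases_tail with rfl | ⟨c, hmc, hcn⟩
  · have := hq₀.unique hnN
    omega
  · obtain ⟨p, q, x, y, hc, hq, hx, hy, hpq, hdep⟩ := he.dependentBefore_of_hb hcn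
    obtain rfl := hq.unique hnN
    obtain rfl := Option.some_inj.1 (hy.symm.trans hlast)
    have hpσ : p < σ.length := by
      by_contra! hle
      obtain ⟨t, ht⟩ := hissue p hle hpq
      obtain ⟨x', hx', hxi, -⟩ := hc
      rw [ht, Option.some_inj] at hx'
      subst hx'
      exact hxi trivial
    refine ⟨p, x, (he.le_of_reflTransGen hmc hq₀ hc).trans' hpq₀, hpσ, ?_, hdep⟩
    rwa [List.getElem?_append_left hpσ] at hx

lemma exists_reflTransGen_of_dependent (h : Paired σ) (he : Paired (σ ++ apnd a))
    (ha : ¬ a.isIssue) {p₀ : ℕ} (hp₀ : p₀ < σ.length)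
    (hhb : ∀ q, p₀ < q → q < σ.length →
      ∃ m n, nodeAt σ p₀ = some m ∧ nodeAt σ q = some n ∧
        Relation.ReflTransGen (traceOf σ).hb m n)
    {q : ℕ} {x : Act Tid D} (hq : p₀ ≤ q) (hqσ : q < σ.length) (hx : σ[q]? = some x)
    (hdep : Dependent x a) :
    ∃ m n, nodeAt (σ ++ apnd a) p₀ = some m ∧
      nodeAt (σ ++ apnd a) ((σ ++ apnd a).length - 1) = some n ∧
      Relation.ReflTransGen (traceOf (σ ++ apnd a)).hb m n := by
  obtain ⟨hlen, hlast, -⟩ := getElem?_append_apnd σ ha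
  have hnN : IsNodePos (σ ++ apnd a) _ _ := ⟨a, hlast, ha, rfl⟩
  obtain ⟨m, mq, hm, hmq, hpath⟩ : ∃ m mq, nodeAt σ p₀ = some m ∧ nodeAt σ q = some mq ∧
      Relation.ReflTransGen (traceOf σ).hb m mq := by
    rcases hq.lt_or_eq with hlt | rfl
    · exact hhb q hlt hqσ
    · obtain ⟨m, -, hm, -⟩ := h.exists_isNodePos hp₀
      exact ⟨m, m, hm, hm, .refl⟩
  refine ⟨m, _, by rw [h.nodeAt_append he hp₀, hm], he.nodeAt_of_isNodePos hnN, ?_⟩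
  refine (Relation.ReflTransGen.mono (fun _ _ => h.hb_append he) _ _ hpath).trans ?_
  exact he.reflTransGen_hb_of_dependent (by rwa [List.getElem?_append_left hqσ]) hlast
    (by omega) hdep (by rwa [h.nodeAt_append he hqσ]) hnN

end Paired

lemma exists_dependent_iff (σ : List (Act Tid D)) (p₀ : ℕ) (a : Act Tid D) :
    (∃ q x, p₀ ≤ q ∧ q < σ.length ∧ σ[q]? = some x ∧ Dependent x a) ↔
    ((∃ q x, p₀ ≤ q ∧ q < σ.length ∧ σ[q]? = some x ∧ x.thread = a.thread) ∨
      (∃ t' adr v, a = Act.load t' adr v ∧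
         ∃ q t'' v'', p₀ ≤ q ∧ q < σ.length ∧ σ[q]? = some (Act.store t'' adr v'')) ∨
      (∃ t' adr v, a = Act.store t' adr v ∧
         ∃ q, p₀ ≤ q ∧ q < σ.length ∧
           ((∃ t'' v'', σ[q]? = some (Act.load t'' adr v'')) ∨
            (∃ t'' v'', σ[q]? = some (Act.store t'' adr v''))))) := by
  constructor
  · rintro ⟨q, x, hq, hqσ, hx, hdep⟩
    cases hdep with
    | thread hth => exact .inl ⟨q, x, hq, hqσ, hx, hth⟩
    | store_load t t' adr v v' => exact .inr (.inl ⟨t', adr, v', rfl, q, t, v, hq, hqσ, hx⟩)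
    | load_store t t' adr v v' =>
      exact .inr (.inr ⟨t', adr, v', rfl, q, hq, hqσ, .inl ⟨t, v, hx⟩⟩)
    | store_store t t' adr v v' =>
      exact .inr (.inr ⟨t', adr, v', rfl, q, hq, hqσ, .inr ⟨t, v, hx⟩⟩)
  · rintro (⟨q, x, hq, hqσ, hx, hth⟩ | ⟨t', adr, v, rfl, q, t'', v'', hq, hqσ, hx⟩ |
      ⟨t', adr, v, rfl, q, hq, hqσ, ⟨t'', v'', hx⟩ | ⟨t'', v'', hx⟩⟩)
    · exact ⟨q, x, hq, hqσ, hx, .thread hth⟩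
    · exact ⟨q, _, hq, hqσ, hx, .store_load ..⟩
    · exact ⟨q, _, hq, hqσ, hx, .load_store ..⟩
    · exact ⟨q, _, hq, hqσ, hx, .store_store ..⟩

/-- Let `τ = τ₁·a₁·τ₂` be an SC computation of a parallel
program `P` such that `a₁ hb* a₂` for every action `a₂` in `τ₂`, and suppose
`τ·a` is also an SC computation of `P`.  Then `a₁ hb* a` in `Tr(τ·a)` if and
only if (i) some action in `a₁·τ₂` belongs to the same thread as `a`, or (ii)
`a` is a load whose address is stored by some action in `a₁·τ₂`, or (iii) `a`
is a store (with its issue) whose address is loaded or stored by some action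
in `a₁·τ₂`. -/
theorem hb_extension_characterization {Tid Lbl D : Type} [Zero D]
    (P : Program Tid Lbl D) (τ₁ τ₂ : List (Act Tid D)) (a₁ a : Act Tid D)
    (ha : ¬ a.isIssue)
    (h1 : SCComput P (τ₁ ++ a₁ :: τ₂))
    (hhb : ∀ q, τ₁.length < q → q < (τ₁ ++ a₁ :: τ₂).length →
      ∃ m n, nodeAt (τ₁ ++ a₁ :: τ₂) τ₁.length = some m ∧
             nodeAt (τ₁ ++ a₁ :: τ₂) q = some n ∧
             Relation.ReflTransGen (traceOf (τ₁ ++ a₁ :: τ₂)).hb m n)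
    (h2 : SCComput P (τ₁ ++ a₁ :: (τ₂ ++ apnd a))) :
    (let τ := τ₁ ++ a₁ :: τ₂
     let τe := τ₁ ++ a₁ :: (τ₂ ++ apnd a)
     (∃ m n, nodeAt τe τ₁.length = some m ∧
        nodeAt τe (τe.length - 1) = some n ∧
        Relation.ReflTransGen (traceOf τe).hb m n) ↔
     ((∃ q x, τ₁.length ≤ q ∧ q < τ.length ∧ τ[q]? = some x ∧ x.thread = a.thread) ∨
      (∃ t' adr v, a = Act.load t' adr v ∧
         ∃ q t'' v'', τ₁.length ≤ q ∧ q < τ.length ∧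
           τ[q]? = some (Act.store t'' adr v'')) ∨
      (∃ t' adr v, a = Act.store t' adr v ∧
         ∃ q, τ₁.length ≤ q ∧ q < τ.length ∧
           ((∃ t'' v'', τ[q]? = some (Act.load t'' adr v'')) ∨
            (∃ t'' v'', τ[q]? = some (Act.store t'' adr v'')))))) := by
  have hτe : τ₁ ++ a₁ :: (τ₂ ++ apnd a) = (τ₁ ++ a₁ :: τ₂) ++ apnd a := by simp
  have hp₀ : τ₁.length < (τ₁ ++ a₁ :: τ₂).length := by simp
  have h := h1.paired
  have he := (hτe ▸ h2).paired
  simp only [hτe, ← exists_dependent_iff]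
  exact ⟨fun ⟨_, _, hm, hn, hmn⟩ => h.exists_dependent_of_reflTransGen he ha hp₀ hm hn hmn,
    fun ⟨_, _, hq, hqσ, hx, hdep⟩ =>
      h.exists_reflTransGen_of_dependent he ha hp₀ hhb hq hqσ hx hdep⟩

end

end TSORob
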